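/- arXiv:1511.06774 — 7 statements merged into one kernel-verified Lean document; each statement's English description precedes it below -/
import Mathlib

section
/- A sequence (x_1, x_2, ..., x_k) of vertices in a graph G is a burning sequence if and only if d(x_i, x_j) ≥ j - i for all 1 ≤ i < j ≤ k, and N_{k-1}[x_1] ∪ N_{k-2}[x_2] ∪ ... ∪ N_0[x_k] = V(G). -/
/-- The set of burned vertices after `t` rounds, given fire sources `x`. -/
def burnedSet {V : Type*} (G : SimpleGraph V) {k : ℕ} (x : Fin k → V) : ℕ → Set V
  | 0 => ∅
  | t + 1 =>
      burnedSet G x t ∪ {v | ∃ u ∈ burnedSet G x t, G.Adj u v} ∪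
        {v | ∃ h : t < k, v = x ⟨t, h⟩}

/-- `x` is a burning sequence: each source is unburned when chosen, and after
round `k` every vertex is burned. -/
def IsBurningSeq {V : Type*} (G : SimpleGraph V) {k : ℕ} (x : Fin k → V) : Prop :=
  (∀ i : Fin k, x i ∉ burnedSet G x i) ∧ burnedSet G x k = Set.univ

/-- The burning number: the least length of a burning sequence. -/
noncomputable def burningNumber {V : Type*} (G : SimpleGraph V) : ℕ :=
  sInf {k | ∃ x : Fin k → V, IsBurningSeq G x}

open SimpleGraph

lemma edist_step {V : Type*} (G : SimpleGraph V) (a v : V) (n : ℕ) :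
    G.edist a v ≤ ((n + 1 : ℕ) : ℕ∞) ↔
      G.edist a v ≤ (n : ℕ∞) ∨ ∃ u, G.edist a u ≤ (n : ℕ∞) ∧ G.Adj u v := by
  constructor
  · intro h
    rcases eq_or_ne a v with rfl | hne
    · left; simp [edist_self]
    have ht : G.edist a v ≠ ⊤ := ne_top_of_le_ne_top (ENat.coe_ne_top _) h
    obtain ⟨p, hp⟩ := exists_walk_of_edist_ne_top ht
    obtain ⟨u, hadj, q, hq⟩ := Walk.exists_eq_cons_of_ne hne.symm p.reverse
    right
    refine ⟨u, ?_, hadj.symm⟩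
    have hlen : q.length + 1 = p.length := by
      have := congrArg Walk.length hq
      simpa [Walk.length_reverse] using this.symm
    have hqn : (q.length : ℕ∞) ≤ (n : ℕ∞) := by
      have hple : (p.length : ℕ∞) ≤ ((n + 1 : ℕ) : ℕ∞) := hp ▸ h
      have : p.length ≤ n + 1 := by exact_mod_cast hple
      exact_mod_cast by omega
    calc G.edist a u ≤ q.reverse.length := edist_le _
      _ = q.length := by rw [Walk.length_reverse]
      _ ≤ (n : ℕ∞) := hqn
  · rintro (h | ⟨u, hu, hadj⟩)
    · exact h.trans (by exact_mod_cast Nat.le_succ n)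
    · calc G.edist a v ≤ G.edist a u + G.edist u v := SimpleGraph.edist_triangle
        _ ≤ (n : ℕ∞) + 1 := add_le_add hu (le_of_eq (edist_eq_one_iff_adj.mpr hadj))
        _ = ((n + 1 : ℕ) : ℕ∞) := by push_cast; rfl

lemma mem_burnedSet {V : Type*} (G : SimpleGraph V) {k : ℕ} (x : Fin k → V) (t : ℕ) (v : V) :
    v ∈ burnedSet G x t ↔
      ∃ i : Fin k, (i : ℕ) < t ∧ G.edist (x i) v ≤ ((t - 1 - i : ℕ) : ℕ∞) := by
  induction t generalizing v with
  | zero => simp [burnedSet]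
  | succ t ih =>
    constructor
    · rintro ((h | h) | ⟨ht, rfl⟩)
      · obtain ⟨i, hit, hd⟩ := ih v |>.mp h
        exact ⟨i, by omega, hd.trans (by exact_mod_cast by omega)⟩
      · obtain ⟨u, hu, hadj⟩ := h
        obtain ⟨i, hit, hd⟩ := ih u |>.mp hu
        refine ⟨i, by omega, ?_⟩
        rw [show (t + 1 - 1 - (i : ℕ)) = (t - 1 - i) + 1 from by omega, edist_step]
        exact Or.inr ⟨u, hd, hadj⟩
      · exact ⟨⟨t, ht⟩, by simp, by simp [SimpleGraph.edist_self]⟩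
    · rintro ⟨i, hit, hd⟩
      rcases eq_or_lt_of_le (Nat.lt_succ_iff.mp hit) with heq | hlt
      · right
        rw [show (t + 1 - 1 - (i : ℕ)) = 0 from by omega] at hd
        have hv : x i = v :=
          (edist_eq_zero_iff (G := G)).mp (le_antisymm (by simpa using hd) bot_le)
        refine ⟨heq ▸ i.isLt, ?_⟩
        rw [← hv]
        congr 1
        exact Fin.ext heq
      · rw [show (t + 1 - 1 - (i : ℕ)) = (t - 1 - i) + 1 from by omega, edist_step] at hd
        rcases hd with hd | ⟨u, hu, hadj⟩
        · exact Or.inl (Or.inl ((ih v).mpr ⟨i, hlt, hd⟩))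
        · exact Or.inl (Or.inr ⟨u, (ih u).mpr ⟨i, hlt, hu⟩, hadj⟩)

/-- `(x_1,…,x_k)` is a burning sequence iff `d(x_i,x_j) ≥ j - i` for `i < j` and
the balls `N_{k-1-i}[x_i]` (0-indexed) cover `V(G)`. -/
theorem isBurningSeq_iff {V : Type*} [Fintype V] (G : SimpleGraph V)
    (k : ℕ) (x : Fin k → V) :
    IsBurningSeq G x ↔
      (∀ i j : Fin k, i < j → (((j : ℕ) - (i : ℕ) : ℕ) : ℕ∞) ≤ G.edist (x i) (x j)) ∧
        ∀ v : V, ∃ i : Fin k, G.edist (x i) v ≤ (k - 1 - (i : ℕ) : ℕ) := by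
  constructor
  · rintro ⟨h1, h2⟩
    constructor
    · intro i j hij
      by_contra hlt
      push_neg at hlt
      apply h1 j
      rw [mem_burnedSet]
      refine ⟨i, hij, ?_⟩
      rw [show ((j : ℕ) - (i : ℕ)) = ((j : ℕ) - 1 - (i : ℕ)) + 1 from by
        have := Fin.lt_def.mp hij; omega] at hlt
      have hlt' : G.edist (x i) (x j) < ((((j : ℕ) - 1 - (i : ℕ)) : ℕ) : ℕ∞) + 1 := by
        exact_mod_cast hlt
      exact (ENat.lt_add_one_iff (ENat.coe_ne_top _)).mp hlt'
    · intro v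
      have hv : v ∈ burnedSet G x k := h2 ▸ Set.mem_univ v
      obtain ⟨i, _, hd⟩ := (mem_burnedSet G x k v).mp hv
      exact ⟨i, hd⟩
  · rintro ⟨hA, hB⟩
    constructor
    · intro j hmem
      obtain ⟨i, hit, hd⟩ := (mem_burnedSet G x j (x j)).mp hmem
      have hij : i < j := Fin.lt_def.mpr hit
      have hle : (((j : ℕ) - (i : ℕ) : ℕ) : ℕ∞) ≤ (((j : ℕ) - 1 - (i : ℕ) : ℕ) : ℕ∞) :=
        le_trans (hA i j hij) hd
      have : ((j : ℕ) - (i : ℕ)) ≤ ((j : ℕ) - 1 - (i : ℕ)) := by exact_mod_cast hle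
      omega
    · refine Set.eq_univ_iff_forall.mpr fun v => ?_
      obtain ⟨i, hd⟩ := hB v
      exact (mem_burnedSet G x k v).mpr ⟨i, i.isLt, hd⟩
end

section
/- For the path P_n on n vertices, the burning number equals ⌈√n⌉. -/
namespace SimpleGraph

variable {V : Type*} {G : SimpleGraph V}

theorem ball_add_one {c : V} {r : ℕ} (hr : r ≠ 0) :
    G.ball c (r + 1) = G.ball c r ∪ {v | ∃ u ∈ G.ball c r, G.Adj u v} := by
  ext v
  simp only [Set.mem_union, Set.mem_ofPred_eq, mem_ball]
  constructor
  · intro hv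
    rcases ((ENat.lt_add_one_iff (ENat.natCast_ne_top r)).1 hv).lt_or_eq with hlt | heq
    · exact Or.inl hlt
    · obtain ⟨p, hp⟩ := exists_walk_of_edist_eq_coe heq
      cases p with
      | nil => simp at hp; omega
      | cons h q =>
        refine Or.inr ⟨_, ?_, h.symm⟩
        calc G.edist _ c ≤ q.length := edist_le q
          _ < r := by rw [Walk.length_cons] at hp; exact_mod_cast (by omega : q.length < r)
  · rintro (hv | ⟨u, hu, huv⟩)
    · exact hv.trans_le le_self_add
    · calc G.edist v c ≤ G.edist v u + G.edist u c := G.edist_triangle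
        _ = G.edist u c + 1 := by rw [edist_eq_one_iff_adj.2 huv.symm, add_comm]
        _ < r + 1 := (ENat.add_lt_add_iff_right ENat.one_ne_top).2 hu

end SimpleGraph

open SimpleGraph

-- A source that is not yet lit (`t ≤ i`) contributes `ball _ 0 = ∅`, by truncated subtraction.
theorem burnedSet_eq_iUnion_ball {V : Type*} {G : SimpleGraph V} {k : ℕ} (x : Fin k → V) (t : ℕ) :
    burnedSet G x t = ⋃ i : Fin k, G.ball (x i) ↑(t - i) := by
  induction t with
  | zero => simp [burnedSet]
  | succ t ih =>
    ext v
    simp only [burnedSet, ih, Set.mem_union, Set.mem_iUnion, Set.mem_ofPred_eq]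
    constructor
    · rintro ((⟨i, hi⟩ | ⟨u, ⟨i, hu⟩, huv⟩) | ⟨ht, rfl⟩)
      · exact ⟨i, ball_mono (by gcongr; omega) hi⟩
      · have hti : t - i ≠ 0 := fun h => by simp [h] at hu
        refine ⟨i, ?_⟩
        rw [show t + 1 - i = t - i + 1 by omega, Nat.cast_add_one, ball_add_one hti]
        exact Or.inr ⟨u, hu, huv⟩
      · exact ⟨⟨t, ht⟩, by simp⟩
    · rintro ⟨i, hi⟩
      rcases lt_trichotomy (i : ℕ) t with hit | hit | hit
      · rw [show t + 1 - i = t - i + 1 by omega, Nat.cast_add_one,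
          ball_add_one (by omega)] at hi
        rcases hi with hi | ⟨u, hu, huv⟩
        · exact Or.inl (Or.inl ⟨i, hi⟩)
        · exact Or.inl (Or.inr ⟨u, ⟨i, hu⟩, huv⟩)
      · have hv : v = x i := by simpa [hit] using hi
        exact Or.inr ⟨hit ▸ i.isLt, by rw [hv]; congr; ext; exact hit⟩
      · simp [show t + 1 - i = 0 by omega] at hi

theorem mem_ball_pathGraph {n r : ℕ} {c v : Fin n} :
    v ∈ (pathGraph n).ball c r ↔ Nat.dist v c < r := by
  induction r generalizing v with
  | zero => simp
  | succ r ih =>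
    rcases Nat.eq_zero_or_pos r with rfl | hr
    · simp only [zero_add, ENat.natCast_one, ball_one, Set.mem_singleton_iff, Fin.ext_iff,
        Nat.dist]
      omega
    rw [Nat.cast_add_one, ball_add_one hr.ne']
    simp only [Set.mem_union, Set.mem_ofPred_eq, ih, pathGraph_adj, Nat.dist]
    constructor
    · rintro (h | ⟨u, hu, huv⟩) <;> omega
    · intro h
      by_cases h' : (v : ℕ) - c + (c - v) < r
      · exact Or.inl h'
      right
      rcases (by omega : (v : ℕ) = c + r ∨ (c : ℕ) = v + r) with hv | hv
      · exact ⟨⟨v - 1, by omega⟩, by simp; omega, by simp; omega⟩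
      · exact ⟨⟨v + 1, by omega⟩, by simp; omega, by simp⟩

theorem ncard_ball_pathGraph_le {n : ℕ} (c : Fin n) (r : ℕ) :
    ((pathGraph n).ball c r).ncard ≤ 2 * r - 1 := by
  calc ((pathGraph n).ball c r).ncard ≤ (Set.Icc (c + 1 - r) (c + r - 1)).ncard := by
        refine Set.ncard_le_ncard_of_injOn Fin.val (fun v hv => ?_) Fin.val_injective.injOn
        rw [mem_ball_pathGraph, Nat.dist] at hv
        simp only [Set.mem_Icc]
        omega
    _ ≤ 2 * r - 1 := by
        rw [Set.ncard_Icc_nat]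
        omega

theorem Fin.sum_two_mul_sub_sub_one (k : ℕ) : ∑ i : Fin k, (2 * (k - i) - 1) = k ^ 2 := by
  induction k with
  | zero => simp
  | succ k ih =>
    rw [Fin.sum_univ_succ]
    simp only [Fin.val_zero, Fin.val_succ, Nat.add_sub_add_right, ih]
    ring_nf
    omega

theorem le_sq_of_isBurningSeq_pathGraph {n k : ℕ} {x : Fin k → Fin n}
    (hx : IsBurningSeq (pathGraph n) x) : n ≤ k ^ 2 := by
  have hcover := hx.2
  rw [burnedSet_eq_iUnion_ball] at hcover
  calc n = (Set.univ : Set (Fin n)).ncard := by simp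
    _ = (⋃ i, (pathGraph n).ball (x i) ↑(k - i)).ncard := by rw [hcover]
    _ ≤ ∑ i, ((pathGraph n).ball (x i) ↑(k - i)).ncard := Set.ncard_iUnion_le_of_fintype _
    _ ≤ ∑ i : Fin k, (2 * (k - i) - 1) :=
        Finset.sum_le_sum fun i _ => ncard_ball_pathGraph_le (x i) (k - i)
    _ = k ^ 2 := Fin.sum_two_mul_sub_sub_one k

-- The open ball of radius `r + 1` around `r * (r + 1)` is the block `[r ^ 2, (r + 1) ^ 2)`.
def pathCenter (n r : ℕ) : ℕ := min (r * (r + 1)) (n - 1)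

theorem pathCenter_add_sub_le {n r s : ℕ} (hrs : r < s) (hs : s ^ 2 < n) :
    pathCenter n r + (s - r) ≤ pathCenter n s := by
  obtain ⟨d, rfl⟩ := Nat.exists_eq_add_of_lt hrs
  have hsq : r * (r + 1) + (r + d + 1 - r) ≤ (r + d + 1) ^ 2 := by
    rw [show r + d + 1 - r = d + 1 by omega]
    nlinarith
  have hmono : (r + d + 1) ^ 2 ≤ (r + d + 1) * (r + d + 1 + 1) := by nlinarith
  unfold pathCenter
  omega

theorem dist_pathCenter_sqrt_le {n v : ℕ} (hv : v < n) :
    Nat.dist v (pathCenter n (Nat.sqrt v)) ≤ Nat.sqrt v := by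
  have h1 := Nat.sqrt_le' v
  have h2 : v < (Nat.sqrt v + 1) ^ 2 := Nat.lt_succ_sqrt' v
  unfold pathCenter Nat.dist
  set r := Nat.sqrt v
  have hcenter : r * (r + 1) = r ^ 2 + r := by ring
  have hsucc : (r + 1) ^ 2 = r ^ 2 + 2 * r + 1 := by ring
  omega

theorem exists_isBurningSeq_pathGraph {n k : ℕ} (hn : n ≤ k ^ 2) (hk : ∀ s < k, s ^ 2 < n) :
    ∃ x : Fin k → Fin n, IsBurningSeq (pathGraph n) x := by
  have hlt (i : Fin k) : pathCenter n (k - 1 - i) < n := by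
    have := hk 0 i.pos
    unfold pathCenter
    omega
  refine ⟨fun i => ⟨pathCenter n (k - 1 - i), hlt i⟩, fun i => ?_, ?_⟩
  · rw [burnedSet_eq_iUnion_ball, Set.mem_iUnion]
    rintro ⟨j, hj⟩
    rw [mem_ball_pathGraph, Nat.dist] at hj
    simp only at hj
    have hji : (j : ℕ) < i := by omega
    have := pathCenter_add_sub_le (n := n) (r := k - 1 - i) (s := k - 1 - j) (by omega)
      (hk _ (by omega))
    omega
  · rw [burnedSet_eq_iUnion_ball, Set.eq_univ_iff_forall]
    intro v
    have hsqrt : Nat.sqrt v < k := Nat.sqrt_lt'.2 (by omega)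
    refine Set.mem_iUnion.2 ⟨⟨k - 1 - Nat.sqrt v, by omega⟩, ?_⟩
    rw [mem_ball_pathGraph]
    simp only
    rw [show k - 1 - (k - 1 - Nat.sqrt v) = Nat.sqrt v by omega]
    have := dist_pathCenter_sqrt_le v.isLt
    omega

theorem ceil_sqrt_le_iff {n k : ℕ} : ⌈Real.sqrt n⌉₊ ≤ k ↔ n ≤ k ^ 2 := by
  rw [Nat.ceil_le, Real.sqrt_le_left (Nat.cast_nonneg k)]
  exact_mod_cast Iff.rfl

theorem burningNumber_pathGraph_general (n : ℕ) :
    burningNumber (SimpleGraph.pathGraph n) = ⌈Real.sqrt n⌉₊ := by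
  obtain ⟨x, hx⟩ := exists_isBurningSeq_pathGraph (ceil_sqrt_le_iff.1 le_rfl)
    fun s hs => lt_of_not_ge fun h => hs.not_ge (ceil_sqrt_le_iff.2 h)
  refine le_antisymm (Nat.sInf_le ⟨x, hx⟩) (le_csInf ⟨_, x, hx⟩ ?_)
  rintro k ⟨y, hy⟩
  exact ceil_sqrt_le_iff.2 (le_sq_of_isBurningSeq_pathGraph hy)

/-- The burning number of the path on `n` vertices is `⌈√n⌉`. -/
theorem burningNumber_pathGraph (n : ℕ) (hn : 1 ≤ n) :
    burningNumber (SimpleGraph.pathGraph n) = ⌈Real.sqrt n⌉₊ :=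
  burningNumber_pathGraph_general n
end

section
/- If G is a path-forest of order n with t ≥ 1 components, then b(G) ≤ ⌈√n⌉ + t − 1. -/
/-- The ball of radius `r` about `r * (r + 1)` is `[r², (r + 1)² - 1]`, so these balls, for
`r ≤ √N`, cover `[0, N]`; capping the centre at `N` keeps it inside. -/
def burnCenter (N r : ℕ) : ℕ := min (r * (r + 1)) N

theorem burnCenter_le (N r : ℕ) : burnCenter N r ≤ N := min_le_right _ _

theorem le_burnCenter {N r ρ : ℕ} (hρr : ρ ≤ r) (hρN : ρ ^ 2 ≤ N) : ρ ^ 2 ≤ burnCenter N r :=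
  le_min (by nlinarith) hρN

theorem burnCenter_add_sub_le {N r r' : ℕ} (hr : r < r') (hr' : r' ≤ Nat.sqrt N) :
    burnCenter N r + (r' - r) ≤ burnCenter N r' := by
  obtain ⟨d, rfl⟩ := Nat.exists_eq_add_of_lt hr
  have hN : (r + d + 1) ^ 2 ≤ N := Nat.le_sqrt'.mp hr'
  have hcenter : burnCenter N r = r * (r + 1) := min_eq_left (by nlinarith)
  rw [hcenter, show r + d + 1 - r = d + 1 by omega]
  exact le_min (by nlinarith) (by nlinarith)

theorem burnCenter_sqrt_dist {N P : ℕ} (hP : P ≤ N) :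
    P ≤ burnCenter N (Nat.sqrt P) + Nat.sqrt P ∧ burnCenter N (Nat.sqrt P) ≤ P + Nat.sqrt P := by
  have hlo := Nat.sqrt_le' P
  have hhi := Nat.lt_succ_sqrt' P
  unfold burnCenter
  constructor
  · rcases min_choice (Nat.sqrt P * (Nat.sqrt P + 1)) N with h | h <;> rw [h] <;> nlinarith
  · exact (min_le_left _ _).trans (by nlinarith)

namespace SimpleGraph

variable {V : Type*} {G : SimpleGraph V}

section Burning

variable {k : ℕ} {x : Fin k → V}

theorem burnedSet_mono : Monotone (burnedSet G x) :=
  monotone_nat_of_le_succ fun _ => Set.subset_union_left.trans Set.subset_union_left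

theorem mem_burnedSet_add_length {u v : V} {s : ℕ} (hu : u ∈ burnedSet G x s)
    (w : G.Walk u v) : v ∈ burnedSet G x (s + w.length) := by
  induction w generalizing s with
  | nil => exact hu
  | cons h w ih =>
    rw [Walk.length_cons, ← add_assoc, add_right_comm]
    exact ih (s := s + 1) (Or.inl (Or.inr ⟨_, hu, h⟩))

theorem mem_burnedSet_iff {v : V} {s : ℕ} :
    v ∈ burnedSet G x s ↔ ∃ (i : Fin k) (w : G.Walk (x i) v), i + w.length < s := by
  constructor
  · induction s generalizing v with
    | zero => simp [burnedSet]
    | succ s ih =>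
      rintro ((hv | ⟨u, hu, huv⟩) | ⟨hs, rfl⟩)
      · obtain ⟨i, w, hw⟩ := ih hv
        exact ⟨i, w, by omega⟩
      · obtain ⟨i, w, hw⟩ := ih hu
        exact ⟨i, w.concat huv, by rw [Walk.length_concat]; omega⟩
      · exact ⟨⟨s, hs⟩, .nil, by simp⟩
  · rintro ⟨i, w, hw⟩
    have hsource : x i ∈ burnedSet G x (i + 1) := Or.inr ⟨i.isLt, rfl⟩
    exact burnedSet_mono (by omega) (mem_burnedSet_add_length hsource w)

theorem isBurningSeq_iff :
    IsBurningSeq G x ↔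
      (∀ i j : Fin k, i < j → ∀ w : G.Walk (x i) (x j), (j : ℕ) ≤ i + w.length) ∧
        ∀ v, ∃ (i : Fin k) (w : G.Walk (x i) v), i + w.length < k := by
  simp only [IsBurningSeq, mem_burnedSet_iff, Set.eq_univ_iff_forall, not_exists, not_lt]
  constructor
  · rintro ⟨hsep, hcover⟩
    refine ⟨fun i j _ w => hsep j i w, hcover⟩
  · rintro ⟨hsep, hcover⟩
    refine ⟨fun j i w => ?_, hcover⟩
    rcases lt_or_ge i j with hij | hji
    · exact hsep i j hij w
    · omega

end Burning

/-- `c j` is a fire source that burns everything within distance `ρ + j` of it. With `ρ = 0` these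
are the sources of a burning sequence listed from last to first. -/
structure IsBurningCover (G : SimpleGraph V) (ρ : ℕ) {m : ℕ} (c : Fin m → V) (S : Set V) :
    Prop where
  separated : ∀ i j, i < j → ∀ w : G.Walk (c i) (c j), (j : ℕ) - i ≤ w.length
  covers : ∀ v ∈ S, ∃ j, ∃ w : G.Walk (c j) v, w.length ≤ ρ + j

theorem burningNumber_le_of_isBurningCover {m : ℕ} {c : Fin m → V}
    (h : IsBurningCover G 0 c Set.univ) : burningNumber G ≤ m := by
  refine Nat.sInf_le ⟨c ∘ Fin.rev, isBurningSeq_iff.mpr ⟨fun i j hij w => ?_, fun v => ?_⟩⟩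
  · have := h.separated j.rev i.rev (Fin.rev_lt_rev.mpr hij) w.reverse
    rw [Walk.length_reverse, Fin.val_rev, Fin.val_rev] at this
    omega
  · obtain ⟨j, w, hw⟩ := h.covers v trivial
    refine ⟨j.rev, w.copy (by simp) rfl, ?_⟩
    rw [Walk.length_copy, Fin.val_rev]
    omega

theorem IsBurningCover.append {ρ m₁ m₂ : ℕ} {c₁ : Fin m₁ → V} {c₂ : Fin m₂ → V} {S₁ S₂ : Set V}
    (h₁ : IsBurningCover G ρ c₁ S₁) (h₂ : IsBurningCover G (ρ + m₁) c₂ S₂)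
    (hreach : ∀ i j, ¬G.Reachable (c₁ i) (c₂ j)) :
    IsBurningCover G ρ (Fin.append c₁ c₂) (S₁ ∪ S₂) where
  separated i j hij w := by
    induction i using Fin.addCases with
    | left i =>
      induction j using Fin.addCases with
      | left j =>
        simpa using h₁.separated i j hij
          (w.copy (Fin.append_left ..) (Fin.append_left ..))
      | right j => exact absurd ⟨w.copy (Fin.append_left ..) (Fin.append_right ..)⟩ (hreach i j)
    | right i =>
      induction j using Fin.addCases with
      | left j =>
        rw [Fin.lt_def, Fin.val_natAdd, Fin.val_castAdd] at hij
        omega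
      | right j =>
        have := h₂.separated i j ((Fin.natAdd_lt_natAdd_iff m₁).mp hij)
          (w.copy (Fin.append_right ..) (Fin.append_right ..))
        simp only [Walk.length_copy] at this
        simp only [Fin.val_natAdd]
        omega
  covers v hv := by
    rcases hv with hv | hv
    · obtain ⟨j, w, hw⟩ := h₁.covers v hv
      exact ⟨Fin.castAdd m₂ j, w.copy (Fin.append_left ..).symm rfl, by simpa using hw⟩
    · obtain ⟨j, w, hw⟩ := h₂.covers v hv
      refine ⟨Fin.natAdd m₁ j, w.copy (Fin.append_right ..).symm rfl, ?_⟩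
      simp only [Walk.length_copy, Fin.val_natAdd]
      omega

theorem Walk.exists_walk_getVert_length_le {a b : V} (p : G.Walk a b) {i j r : ℕ}
    (hij : j ≤ i + r) (hji : i ≤ j + r) :
    ∃ w : G.Walk (p.getVert i) (p.getVert j), w.length ≤ r := by
  have forward : ∀ i j, i ≤ j → j ≤ i + r →
      ∃ w : G.Walk (p.getVert i) (p.getVert j), w.length ≤ r :=
    fun i j hij hr => ⟨((p.drop i).take (j - i)).copy rfl (by simp [hij]), by simp; omega⟩
  rcases le_total i j with h | h
  · exact forward i j h hij
  · obtain ⟨w, hw⟩ := forward j i h hji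
    exact ⟨w.reverse, by simpa using hw⟩

theorem IsAcyclic.sub_le_length_of_isPath (hac : G.IsAcyclic) {a b : V} {p : G.Walk a b}
    (hp : p.IsPath) {i j : ℕ} (hij : i ≤ j) (hj : j ≤ p.length)
    (w : G.Walk (p.getVert i) (p.getVert j)) : j - i ≤ w.length := by
  classical
  let q : G.Walk (p.getVert i) (p.getVert j) := ((p.drop i).take (j - i)).copy rfl (by simp [hij])
  have hq : q.IsPath := by simpa [q] using (hp.drop i).take (j - i)
  have hqw : q = w.bypass :=
    congrArg Subtype.val ((hac.subsingleton_path _ _).elim ⟨q, hq⟩ ⟨w.bypass, w.bypass_isPath⟩)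
  have hlen : q.length = j - i := by simp [q]; omega
  exact hlen ▸ hqw ▸ w.length_bypass_le_length

theorem IsAcyclic.exists_isBurningCover_support (hac : G.IsAcyclic) {a b : V} {p : G.Walk a b}
    (hp : p.IsPath) (ρ : ℕ) :
    ∃ (u : ℕ) (c : Fin (u + 1) → V), IsBurningCover G ρ c {v | v ∈ p.support} ∧
      (∀ j, c j ∈ p.support) ∧ (ρ + u) ^ 2 ≤ ρ ^ 2 + p.length := by
  set N := ρ ^ 2 + p.length
  have hρ : ρ ≤ Nat.sqrt N := Nat.le_sqrt'.mpr (by omega)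
  refine ⟨Nat.sqrt N - ρ, fun j => p.getVert (burnCenter N (ρ + j) - ρ ^ 2), ⟨?_, ?_⟩,
    fun j => p.getVert_mem_support _, ?_⟩
  · intro i j hij w
    have hsep := burnCenter_add_sub_le (N := N) (r := ρ + i) (r' := ρ + j) (by omega) (by omega)
    have hi := le_burnCenter (N := N) (r := ρ + i) (Nat.le_add_right ρ i) (by omega)
    have hj := burnCenter_le N (ρ + j)
    have := hac.sub_le_length_of_isPath hp (by omega) (by omega) w
    omega
  · intro v hv
    obtain ⟨q, rfl, hq⟩ := Walk.mem_support_iff_exists_getVert.mp hv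
    obtain ⟨hlo, hhi⟩ := burnCenter_sqrt_dist (N := N) (P := ρ ^ 2 + q) (by omega)
    obtain ⟨r, hr⟩ : ∃ r, Nat.sqrt (ρ ^ 2 + q) = ρ + r :=
      Nat.exists_eq_add_of_le (Nat.le_sqrt'.mpr (by omega))
    have hrN : ρ + r ≤ Nat.sqrt N := hr ▸ Nat.sqrt_le_sqrt (by omega)
    have hcenter := le_burnCenter (N := N) (Nat.le_add_right ρ r) (by omega)
    rw [hr] at hlo hhi
    refine ⟨⟨r, by omega⟩, ?_⟩
    show ∃ w : G.Walk (p.getVert (burnCenter N (ρ + r) - ρ ^ 2)) (p.getVert q), w.length ≤ ρ + r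
    exact p.exists_walk_getVert_length_le (by omega) (by omega)
  · rw [Nat.add_sub_cancel' hρ]
    exact Nat.sqrt_le' N

section MaxDegreeTwo

variable [Finite V] (hdeg : ∀ v, (G.neighborSet v).ncard ≤ 2)
include hdeg

theorem Walk.IsPath.eq_start_or_eq_end_of_adj_notMem {a b v w : V} {p : G.Walk a b}
    (hp : p.IsPath) (hv : v ∈ p.support) (hvw : G.Adj v w) (hw : w ∉ p.support) :
    v = a ∨ v = b := by
  obtain ⟨i, rfl, hi⟩ := Walk.mem_support_iff_exists_getVert.mp hv
  rcases Nat.eq_zero_or_pos i with rfl | hi₀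
  · exact Or.inl p.getVert_zero
  rcases hi.eq_or_lt with rfl | hiL
  · exact Or.inr p.getVert_length
  exfalso
  have hprev : G.Adj (p.getVert i) (p.getVert (i - 1)) := by
    have := p.adj_getVert_succ (i := i - 1) (by omega)
    rw [Nat.sub_add_cancel hi₀] at this
    exact this.symm
  have hnext : G.Adj (p.getVert i) (p.getVert (i + 1)) := p.adj_getVert_succ hiL
  have hne : p.getVert (i - 1) ≠ p.getVert (i + 1) := fun h => by
    have := hp.getVert_injOn (by simp only [Set.mem_ofPred_eq]; omega)
      (by simp only [Set.mem_ofPred_eq]; omega) h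
    omega
  have hthree : ({p.getVert (i - 1), p.getVert (i + 1), w} : Set V).ncard = 3 :=
    Set.ncard_eq_three.mpr ⟨_, _, w, hne, fun h => hw (h ▸ p.getVert_mem_support (i - 1)),
      fun h => hw (h ▸ p.getVert_mem_support (i + 1)), rfl⟩
  have hsub :
      ({p.getVert (i - 1), p.getVert (i + 1), w} : Set V) ⊆ G.neighborSet (p.getVert i) := by
    simp only [Set.insert_subset_iff, Set.singleton_subset_iff, mem_neighborSet]
    exact ⟨hprev, hnext, hvw⟩
  have := Set.ncard_le_ncard hsub (Set.toFinite _)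
  have := hdeg (p.getVert i)
  omega

/-- A longest path in `K` cannot be extended at its ends, and its interior vertices already
have both their neighbours on it, so no edge leaves it. -/
theorem exists_isPath_forall_mem_support_iff (K : G.ConnectedComponent) :
    ∃ (a b : V) (p : G.Walk a b), p.IsPath ∧ ∀ v, v ∈ p.support ↔ G.connectedComponentMk v = K := by
  have := Fintype.ofFinite V
  let S : Set ℕ := {n | ∃ (a b : V) (p : G.Walk a b), p.IsPath ∧ G.connectedComponentMk a = K ∧
    p.length = n}
  have hbdd : BddAbove S :=
    ⟨Fintype.card V, by rintro _ ⟨a, b, p, hp, -, rfl⟩; exact hp.length_lt.le⟩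
  obtain ⟨a₀, ha₀⟩ := K.exists_rep
  have hne : S.Nonempty := ⟨0, a₀, a₀, .nil, .nil, ha₀, rfl⟩
  obtain ⟨a, b, p, hp, hKa, hlen⟩ := Nat.sSup_mem hne hbdd
  have hlongest : ∀ {a' b' : V} (q : G.Walk a' b'), q.IsPath → G.connectedComponentMk a' = K →
      q.length ≤ p.length := fun q hq hK => hlen ▸ le_csSup hbdd ⟨_, _, q, hq, hK, rfl⟩
  have hKp : ∀ v ∈ p.support, G.connectedComponentMk v = K := by
    intro v hv
    obtain ⟨i, rfl, -⟩ := Walk.mem_support_iff_exists_getVert.mp hv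
    exact (ConnectedComponent.sound ⟨p.take i⟩).symm.trans hKa
  have hclosed : ∀ v ∈ p.support, ∀ w, G.Adj v w → w ∈ p.support := by
    intro v hv w hvw
    by_contra hw
    have hKw : G.connectedComponentMk w = K :=
      (ConnectedComponent.connectedComponentMk_eq_of_adj hvw).symm.trans (hKp v hv)
    rcases hp.eq_start_or_eq_end_of_adj_notMem hdeg hv hvw hw with rfl | rfl
    · have := hlongest (.cons hvw.symm p) ((Walk.cons_isPath_iff _ _).2 ⟨hp, hw⟩) hKw
      simp at this
    · have := hlongest (.cons hvw.symm p.reverse)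
        ((Walk.cons_isPath_iff _ _).2 ⟨hp.reverse, by simpa using hw⟩) hKw
      simp at this
  have hreach : ∀ {u v : V} (q : G.Walk u v), u ∈ p.support → v ∈ p.support := by
    intro u v q
    induction q with
    | nil => exact id
    | cons h q ih => exact fun hu => ih (hclosed _ hu _ h)
  refine ⟨a, b, p, hp, fun v => ⟨hKp v, fun hv => ?_⟩⟩
  obtain ⟨q⟩ := ConnectedComponent.exact (hKa.trans hv.symm)
  exact hreach q p.start_mem_support

/-- The radii run on from one component to the next, which is why the cover is built from an
arbitrary starting radius `ρ`. -/
theorem IsAcyclic.exists_isBurningCover_components (hac : G.IsAcyclic)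
    (s : Finset G.ConnectedComponent) (ρ : ℕ) :
    ∃ (m d : ℕ) (c : Fin m → V), m = s.card + d ∧
      IsBurningCover G ρ c {v | G.connectedComponentMk v ∈ s} ∧
      (∀ j, G.connectedComponentMk (c j) ∈ s) ∧
      (ρ + d) ^ 2 + s.card ≤ ρ ^ 2 + {v | G.connectedComponentMk v ∈ s}.ncard := by
  classical
  induction s using Finset.induction_on generalizing ρ with
  | empty => exact ⟨0, 0, Fin.elim0, rfl, ⟨fun i => i.elim0, by simp⟩, fun i => i.elim0, by simp⟩
  | insert K s hK ih =>
    obtain ⟨a, b, p, hp, hpK⟩ := exists_isPath_forall_mem_support_iff hdeg K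
    obtain ⟨u, c₁, hc₁, hc₁K, hu⟩ := hac.exists_isBurningCover_support hp ρ
    obtain ⟨m, d, c₂, rfl, hc₂, hc₂s, hd⟩ := ih (ρ + (u + 1))
    have hreach : ∀ i j, ¬G.Reachable (c₁ i) (c₂ j) := fun i j h =>
      hK ((hpK _).mp (hc₁K i) ▸ ConnectedComponent.sound h ▸ hc₂s j)
    have hS : {v | G.connectedComponentMk v ∈ insert K s} =
        {v | v ∈ p.support} ∪ {v | G.connectedComponentMk v ∈ s} := by
      ext v
      simp [hpK]
    have hcard : {v | G.connectedComponentMk v ∈ insert K s}.ncard =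
        p.length + 1 + {v | G.connectedComponentMk v ∈ s}.ncard := by
      rw [hS, Set.ncard_union_eq ?_ (Set.toFinite _) (Set.toFinite _)]
      · rw [← List.coe_toFinset, Set.ncard_coe_finset,
          List.toFinset_card_of_nodup hp.support_nodup, Walk.length_support]
      · exact Set.disjoint_left.mpr fun v hv hvs => hK ((hpK v).mp hv ▸ hvs)
    refine ⟨u + 1 + (s.card + d), u + d, Fin.append c₁ c₂, by
      rw [Finset.card_insert_of_notMem hK]; omega, hS ▸ hc₁.append hc₂ hreach, ?_, ?_⟩
    · intro j
      induction j using Fin.addCases with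
      | left j => simp [← (hpK _).mp (hc₁K j)]
      | right j => simp [hc₂s j]
    · have hsq₁ : (ρ + (u + 1) + d) ^ 2 = (ρ + (u + d)) ^ 2 + 2 * (ρ + (u + d)) + 1 := by ring
      have hsq₂ : (ρ + (u + 1)) ^ 2 = (ρ + u) ^ 2 + 2 * (ρ + u) + 1 := by ring
      rw [Finset.card_insert_of_notMem hK, hcard]
      linarith

end MaxDegreeTwo

end SimpleGraph

/-- A path-forest (acyclic graph of maximum degree at most two) of order `n`
with `t ≥ 1` components has burning number at most `⌈√n⌉ + t - 1`. -/
theorem burningNumber_pathForest_le {V : Type*} [Fintype V] (G : SimpleGraph V)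
    (t : ℕ) (ht : 1 ≤ t)
    (hacyclic : G.IsAcyclic) (hdeg : ∀ v : V, (G.neighborSet v).ncard ≤ 2)
    (hcomp : Nat.card G.ConnectedComponent = t) :
    burningNumber G ≤ ⌈Real.sqrt (Fintype.card V)⌉₊ + t - 1 := by
  have := Fintype.ofFinite G.ConnectedComponent
  obtain ⟨m, d, c, rfl, hc, -, hd⟩ :=
    hacyclic.exists_isBurningCover_components hdeg Finset.univ 0
  have hburn := SimpleGraph.burningNumber_le_of_isBurningCover (by simpa using hc)
  simp only [Finset.mem_univ, Set.ofPred_true, Set.ncard_univ, Finset.card_univ,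
    ← Nat.card_eq_fintype_card, hcomp, zero_add, zero_pow two_ne_zero] at hburn hd ⊢
  have hd_lt : d < ⌈Real.sqrt (Nat.card V)⌉₊ := by
    rw [Nat.lt_ceil, Real.lt_sqrt (Nat.cast_nonneg d)]
    exact_mod_cast (by omega : d ^ 2 < Nat.card V)
  omega
end

section
/- If T is a perfect binary tree of radius r ≥ 1 (depth r), then b(T) = r + 1. -/
/-- The perfect binary tree of radius `r` (heap indexing: vertex `i` has
children `2i+1` and `2i+2`) on `2^(r+1) - 1` vertices. -/
def perfectBinaryTree (r : ℕ) : SimpleGraph (Fin (2 ^ (r + 1) - 1)) :=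
  SimpleGraph.fromRel fun i j => (j : ℕ) = 2 * (i : ℕ) + 1 ∨ (j : ℕ) = 2 * (i : ℕ) + 2

namespace PBTaux

/-- tree distance between heap-coordinates (1-based) -/
def td (a b : ℕ) : ℕ :=
  if a = b then 0
  else if a < b then td a (b / 2) + 1
  else td (a / 2) b + 1
termination_by a + b
decreasing_by
  · omega
  · omega

lemma td_self (a : ℕ) : td a a = 0 := by rw [td]; simp

lemma td_lt {a b : ℕ} (h : a < b) : td a b = td a (b / 2) + 1 := by
  rw [td, if_neg (by omega), if_pos h]

lemma td_gt {a b : ℕ} (h : b < a) : td a b = td (a / 2) b + 1 := by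
  rw [td, if_neg (by omega), if_neg (by omega)]

lemma td_lip : ∀ x u c : ℕ, 1 ≤ u → (c = 2 * u ∨ c = 2 * u + 1) →
    td x c ≤ td x u + 1 ∧ td x u ≤ td x c + 1 := by
  intro x
  induction x using Nat.strong_induction_on with
  | _ x ih =>
    intro u c hu hc
    have hcu : c / 2 = u := by omega
    have huc : u < c := by omega
    rcases lt_trichotomy x c with h | h | h
    · rw [td_lt h, hcu]; omega
    · subst h
      rw [td_self, td_gt huc, hcu, td_self]
      omega
    · have hux : u < x := by omega
      rw [td_gt h, td_gt hux]
      have := ih (x / 2) (by omega) u c hu hc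
      omega

lemma td_pow {i j : ℕ} (h : j ≤ i) : td (2 ^ j) (2 ^ i) = i - j := by
  induction i with
  | zero => interval_cases j; simp [td_self]
  | succ i ih =>
    rcases Nat.eq_or_lt_of_le h with h' | h'
    · subst h'; simp [td_self]
    · have hj : j ≤ i := by omega
      have hlt : 2 ^ j < 2 ^ (i + 1) := Nat.pow_lt_pow_right one_lt_two (by omega)
      rw [td_lt hlt]
      have : 2 ^ (i + 1) / 2 = 2 ^ i := by
        rw [pow_succ]; omega
      rw [this, ih hj]
      omega

lemma log_div_pow {v t : ℕ} (hv : 1 ≤ v) (ht : t ≤ Nat.log 2 v) :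
    Nat.log 2 (v / 2 ^ t) = Nat.log 2 v - t := by
  induction t with
  | zero => simp
  | succ t ih =>
    have ht' : t ≤ Nat.log 2 v := by omega
    have h1 : v / 2 ^ (t + 1) = v / 2 ^ t / 2 := by
      rw [Nat.div_div_eq_div_mul, ← pow_succ]
    rw [h1, Nat.log_div_base, ih ht']
    omega

lemma div_pow_pos {v t : ℕ} (hv : 1 ≤ v) (ht : t ≤ Nat.log 2 v) : 1 ≤ v / 2 ^ t := by
  have h1 : 2 ^ t ≤ 2 ^ Nat.log 2 v := Nat.pow_le_pow_right (by norm_num) ht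
  have h2 : 2 ^ Nat.log 2 v ≤ v := Nat.pow_log_le_self 2 (by omega)
  exact (Nat.one_le_div_iff (by positivity)).mpr (by omega)

lemma td_decompose : ∀ n a b : ℕ, a + b ≤ n → 1 ≤ a → 1 ≤ b →
    ∃ t u : ℕ, t + u = td a b ∧ t ≤ Nat.log 2 a ∧ u ≤ Nat.log 2 b ∧
      a / 2 ^ t = b / 2 ^ u := by
  intro n
  induction n with
  | zero => intro a b h ha hb; omega
  | succ n ih =>
    intro a b h ha hb
    rcases lt_trichotomy a b with hab | hab | hab
    · have hb2 : 2 ≤ b := by omega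
      obtain ⟨t, u, h1, h2, h3, h4⟩ := ih a (b / 2) (by omega) ha (by omega)
      refine ⟨t, u + 1, ?_, h2, ?_, ?_⟩
      · rw [td_lt hab]; omega
      · have hl : Nat.log 2 (b / 2) = Nat.log 2 b - 1 := Nat.log_div_base 2 b
        have hp : 0 < Nat.log 2 b := Nat.log_pos one_lt_two (by omega)
        omega
      · rw [pow_succ', ← Nat.div_div_eq_div_mul]; exact h4
    · subst hab
      exact ⟨0, 0, by simp [td_self], by simp, by simp, rfl⟩
    · have ha2 : 2 ≤ a := by omega
      obtain ⟨t, u, h1, h2, h3, h4⟩ := ih (a / 2) b (by omega) (by omega) hb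
      refine ⟨t + 1, u, ?_, ?_, h3, ?_⟩
      · rw [td_gt hab]; omega
      · have hl : Nat.log 2 (a / 2) = Nat.log 2 a - 1 := Nat.log_div_base 2 a
        have hp : 0 < Nat.log 2 a := Nat.log_pos one_lt_two (by omega)
        omega
      · rw [pow_succ', ← Nat.div_div_eq_div_mul]; exact h4

lemma log_le_of_lt_pow {v m : ℕ} (hv : 1 ≤ v) (h : v < 2 ^ (m + 1)) : Nat.log 2 v ≤ m := by
  have := Nat.log_lt_of_lt_pow (by omega : v ≠ 0) h
  omega

lemma log_leaf {r ℓ : ℕ} (h1 : 2 ^ r ≤ ℓ) (h2 : ℓ < 2 ^ (r + 1)) : Nat.log 2 ℓ = r :=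
  Nat.log_eq_of_pow_le_of_lt_pow h1 h2

/-- Key counting lemma: a ball of radius `s` around `v` contains at most `2^s` leaves. -/
lemma count_le (r s v : ℕ) (hv1 : 1 ≤ v) (hv2 : v < 2 ^ (r + 1)) :
    ((Finset.Ico (2 ^ r) (2 ^ (r + 1))).filter fun ℓ => td v ℓ ≤ s).card ≤ 2 ^ s := by
  set F := (Finset.Ico (2 ^ r) (2 ^ (r + 1))).filter fun ℓ => td v ℓ ≤ s with hF
  rcases F.eq_empty_or_nonempty with he | ⟨ℓ0, hℓ0⟩
  · simp [he]
  · set d := Nat.log 2 v with hd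
    have hdr : d ≤ r := log_le_of_lt_pow hv1 hv2
    -- basic decomposition facts for any member ℓ of F
    have key : ∀ ℓ ∈ F, ∃ t u : ℕ, t + u ≤ s ∧ t ≤ d ∧ u ≤ r ∧
        v / 2 ^ t = ℓ / 2 ^ u ∧ r + t = d + u := by
      intro ℓ hℓ
      rw [hF, Finset.mem_filter, Finset.mem_Ico] at hℓ
      obtain ⟨⟨hℓ1, hℓ2⟩, hℓ3⟩ := hℓ
      have hℓp : 1 ≤ ℓ := by have := Nat.one_le_two_pow (n := r); omega
      obtain ⟨t, u, h1, h2, h3, h4⟩ := td_decompose (v + ℓ) v ℓ le_rfl hv1 hℓp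
      have hlogℓ : Nat.log 2 ℓ = r := log_leaf hℓ1 hℓ2
      rw [hlogℓ] at h3
      have e1 : Nat.log 2 (v / 2 ^ t) = d - t := log_div_pow hv1 h2
      have e2 : Nat.log 2 (ℓ / 2 ^ u) = r - u := by
        have := log_div_pow hℓp (t := u) (by omega)
        rw [hlogℓ] at this
        exact this
      rw [h4, e2] at e1
      exact ⟨t, u, by omega, h2, h3, h4, by omega⟩
    obtain ⟨t0, u0, k1, k2, k3, k4, k5⟩ := key ℓ0 hℓ0
    have hrd : r ≤ d + s := by omega
    set U := (s + r - d) / 2 with hU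
    have hUs : U ≤ s := by omega
    have hUd : r ≤ U + d := by omega
    set E := U + d - r with hE
    set q := v / 2 ^ E with hq
    have hsub : F ⊆ Finset.Ico (q * 2 ^ U) ((q + 1) * 2 ^ U) := by
      intro ℓ hℓ
      obtain ⟨t, u, h1, h2, h3, h4, h5⟩ := key ℓ hℓ
      have huU : u ≤ U := by omega
      have hq' : ℓ / 2 ^ U = q := by
        have c1 : ℓ / 2 ^ U = ℓ / 2 ^ u / 2 ^ (U - u) := by
          rw [Nat.div_div_eq_div_mul, ← pow_add]
          congr 2
          omega
        have c2 : v / 2 ^ E = v / 2 ^ t / 2 ^ (U - u) := by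
          rw [Nat.div_div_eq_div_mul, ← pow_add]
          congr 2
          omega
        rw [c1, ← h4, hq, c2]
      rw [Finset.mem_Ico]
      constructor
      · calc q * 2 ^ U = ℓ / 2 ^ U * 2 ^ U := by rw [hq']
          _ ≤ ℓ := Nat.div_mul_le_self _ _
      · have hmod : 2 ^ U * (ℓ / 2 ^ U) + ℓ % 2 ^ U = ℓ := Nat.div_add_mod ℓ (2 ^ U)
        have hm2 : ℓ % 2 ^ U < 2 ^ U := Nat.mod_lt _ (by positivity)
        have : (q + 1) * 2 ^ U = 2 ^ U * (ℓ / 2 ^ U) + 2 ^ U := by rw [hq']; ring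
        omega
    calc F.card ≤ (Finset.Ico (q * 2 ^ U) ((q + 1) * 2 ^ U)).card := Finset.card_le_card hsub
      _ = (q + 1) * 2 ^ U - q * 2 ^ U := Nat.card_Ico _ _
      _ = 2 ^ U := by rw [add_mul, one_mul, Nat.add_sub_cancel_left]
      _ ≤ 2 ^ s := Nat.pow_le_pow_right (by norm_num) hUs


variable {V : Type*} {G : SimpleGraph V} {k : ℕ} {x : Fin k → V}

lemma burnedSet_zero : burnedSet G x 0 = ∅ := rfl

lemma burnedSet_succ (t : ℕ) :
    burnedSet G x (t + 1) =
      burnedSet G x t ∪ {v | ∃ u ∈ burnedSet G x t, G.Adj u v} ∪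
        {v | ∃ h : t < k, v = x ⟨t, h⟩} := rfl

lemma burnedSet_mono {t : ℕ} {v : V} (h : v ∈ burnedSet G x t) : v ∈ burnedSet G x (t + 1) := by
  rw [burnedSet_succ]
  exact Or.inl (Or.inl h)

lemma source_mem (j : Fin k) {t : ℕ} (h : (j : ℕ) < t) : x j ∈ burnedSet G x t := by
  induction t with
  | zero => omega
  | succ t ih =>
    rcases Nat.lt_or_ge (j : ℕ) t with h' | h'
    · exact burnedSet_mono (ih h')
    · have hjt : (j : ℕ) = t := by omega
      rw [burnedSet_succ]
      refine Or.inr ⟨hjt ▸ j.isLt, ?_⟩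
      congr 1
      exact Fin.ext (by simpa using hjt)
lemma adj_mem {t : ℕ} {u v : V} (hu : u ∈ burnedSet G x t) (h : G.Adj u v) :
    v ∈ burnedSet G x (t + 1) := by
  rw [burnedSet_succ]
  exact Or.inl (Or.inr ⟨u, hu, h⟩)

/-- Adjacency in the perfect binary tree is 1-Lipschitz for `td` in heap coordinates. -/
lemma adj_td {r : ℕ} {u v : Fin (2 ^ (r + 1) - 1)}
    (h : (perfectBinaryTree r).Adj u v) (w : ℕ) :
    td w ((v : ℕ) + 1) ≤ td w ((u : ℕ) + 1) + 1 := by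
  rw [perfectBinaryTree, SimpleGraph.fromRel_adj] at h
  obtain ⟨hne, h | h⟩ := h <;> rcases h with h | h
  · exact (td_lip w ((u : ℕ) + 1) ((v : ℕ) + 1) (by omega) (by omega)).1
  · exact (td_lip w ((u : ℕ) + 1) ((v : ℕ) + 1) (by omega) (by omega)).1
  · exact (td_lip w ((v : ℕ) + 1) ((u : ℕ) + 1) (by omega) (by omega)).2
  · exact (td_lip w ((v : ℕ) + 1) ((u : ℕ) + 1) (by omega) (by omega)).2

/-- Everything burned at time `t` is within `td`-distance `t - 1 - j` of some source `x j`. -/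
lemma coverage {r k : ℕ} {x : Fin k → Fin (2 ^ (r + 1) - 1)} :
    ∀ t (v : Fin (2 ^ (r + 1) - 1)), v ∈ burnedSet (perfectBinaryTree r) x t →
      ∃ j : Fin k, (j : ℕ) < t ∧ td ((x j : ℕ) + 1) ((v : ℕ) + 1) ≤ t - 1 - (j : ℕ) := by
  intro t
  induction t with
  | zero => intro v hv; exact absurd hv (by simp [burnedSet_zero])
  | succ t ih =>
    intro v hv
    rw [burnedSet_succ] at hv
    rcases hv with (hv | hv) | hv
    · obtain ⟨j, hj1, hj2⟩ := ih v hv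
      exact ⟨j, by omega, by omega⟩
    · obtain ⟨u, hu, hadj⟩ := hv
      obtain ⟨j, hj1, hj2⟩ := ih u hu
      refine ⟨j, by omega, ?_⟩
      have := adj_td hadj ((x j : ℕ) + 1)
      omega
    · obtain ⟨ht, hv⟩ := hv
      have hc : ((⟨t, ht⟩ : Fin k) : ℕ) = t := rfl
      refine ⟨⟨t, ht⟩, by omega, ?_⟩
      rw [hv, td_self]
      omega

lemma geom_sum (k : ℕ) : ∑ i ∈ Finset.range k, 2 ^ i = 2 ^ k - 1 := by
  induction k with
  | zero => simp
  | succ k ih =>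
    rw [Finset.sum_range_succ, ih, pow_succ]
    have : 1 ≤ 2 ^ k := Nat.one_le_two_pow
    omega

/-- No burning sequence of length `k ≤ r` exists. -/
lemma lower {r k : ℕ} (hk : k ≤ r) (x : Fin k → Fin (2 ^ (r + 1) - 1))
    (hx : IsBurningSeq (perfectBinaryTree r) x) : False := by
  classical
  set L : Finset ℕ := Finset.Ico (2 ^ r) (2 ^ (r + 1)) with hL
  have hcard : L.card = 2 ^ r := by
    rw [hL, Nat.card_Ico, pow_succ]
    omega
  have hsub : L ⊆ Finset.univ.biUnion fun j : Fin k =>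
      L.filter fun ℓ => td ((x j : ℕ) + 1) ℓ ≤ k - 1 - (j : ℕ) := by
    intro ℓ hℓ
    rw [hL, Finset.mem_Ico] at hℓ
    have h2r : 1 ≤ 2 ^ r := Nat.one_le_two_pow
    have h2r1 : 2 ≤ 2 ^ (r + 1) := by
      have : (2:ℕ) ^ 1 ≤ 2 ^ (r + 1) := Nat.pow_le_pow_right (by norm_num) (by omega)
      simpa using this
    set v : Fin (2 ^ (r + 1) - 1) := ⟨ℓ - 1, by omega⟩ with hv
    have hvb : v ∈ burnedSet (perfectBinaryTree r) x k := by
      rw [hx.2]; trivial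
    obtain ⟨j, hj1, hj2⟩ := coverage k v hvb
    rw [Finset.mem_biUnion]
    refine ⟨j, Finset.mem_univ _, Finset.mem_filter.mpr ⟨by rw [hL, Finset.mem_Ico]; omega, ?_⟩⟩
    have hvℓ : ((v : ℕ) + 1) = ℓ := by rw [hv]; simp; omega
    rw [← hvℓ]
    exact hj2
  have hbound : ∀ j : Fin k,
      (L.filter fun ℓ => td ((x j : ℕ) + 1) ℓ ≤ k - 1 - (j : ℕ)).card ≤ 2 ^ (k - 1 - (j : ℕ)) := by
    intro j
    have hj := (x j).isLt
    exact count_le r (k - 1 - (j : ℕ)) ((x j : ℕ) + 1) (by omega) (by omega)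
  have hsum : 2 ^ r ≤ ∑ j : Fin k, 2 ^ (k - 1 - (j : ℕ)) := by
    calc 2 ^ r = L.card := hcard.symm
      _ ≤ (Finset.univ.biUnion fun j : Fin k =>
            L.filter fun ℓ => td ((x j : ℕ) + 1) ℓ ≤ k - 1 - (j : ℕ)).card :=
        Finset.card_le_card hsub
      _ ≤ ∑ j : Fin k,
            (L.filter fun ℓ => td ((x j : ℕ) + 1) ℓ ≤ k - 1 - (j : ℕ)).card :=
        Finset.card_biUnion_le
      _ ≤ ∑ j : Fin k, 2 ^ (k - 1 - (j : ℕ)) := Finset.sum_le_sum fun j _ => hbound j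
  have hsum2 : ∑ j : Fin k, 2 ^ (k - 1 - (j : ℕ)) = 2 ^ k - 1 := by
    rw [Fin.sum_univ_eq_sum_range (fun j => 2 ^ (k - 1 - j)) k, Finset.sum_range_reflect, geom_sum]
  have hkr : (2:ℕ) ^ k ≤ 2 ^ r := Nat.pow_le_pow_right (by norm_num) hk
  have h1 : 1 ≤ (2:ℕ) ^ k := Nat.one_le_two_pow
  omega

/-- The burning sequence: root, then the left spine. -/
def seq (r : ℕ) : Fin (r + 1) → Fin (2 ^ (r + 1) - 1) := fun i =>
  ⟨2 ^ (i : ℕ) - 1, by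
    have h1 : 2 ^ (i : ℕ) ≤ 2 ^ r := Nat.pow_le_pow_right (by norm_num) (by omega)
    have h2 : (2:ℕ) ^ r < 2 ^ (r + 1) := Nat.pow_lt_pow_right (by norm_num) (by omega)
    have h3 : 1 ≤ 2 ^ (i : ℕ) := Nat.one_le_two_pow
    omega⟩

lemma seq_coe (r : ℕ) (i : Fin (r + 1)) : ((seq r i : ℕ) + 1) = 2 ^ (i : ℕ) := by
  have h3 : 1 ≤ 2 ^ (i : ℕ) := Nat.one_le_two_pow
  simp [seq]
  omega

lemma depth_burn {r k : ℕ} {x : Fin k → Fin (2 ^ (r + 1) - 1)} (hk : 0 < k)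
    (h0 : (x ⟨0, hk⟩ : ℕ) = 0) :
    ∀ d (v : Fin (2 ^ (r + 1) - 1)), Nat.log 2 ((v : ℕ) + 1) ≤ d →
      v ∈ burnedSet (perfectBinaryTree r) x (d + 1) := by
  intro d
  induction d with
  | zero =>
    intro v hv
    have hv1 : (v : ℕ) + 1 < 2 := by
      by_contra hc
      have := Nat.log_pos (b := 2) one_lt_two (n := (v : ℕ) + 1) (by omega)
      omega
    have : v = x ⟨0, hk⟩ := Fin.ext (by omega)
    rw [this]
    exact source_mem _ (by simpa using hk)
  | succ d ih =>
    intro v hv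
    rcases Nat.lt_or_ge (Nat.log 2 ((v : ℕ) + 1)) (d + 1) with h | h
    · exact burnedSet_mono (ih v (by omega))
    · have hd1 : 1 ≤ Nat.log 2 ((v : ℕ) + 1) := by omega
      have hv2 : 2 ≤ (v : ℕ) + 1 := by
        by_contra hc
        have : Nat.log 2 ((v : ℕ) + 1) = 0 := by
          have : (v : ℕ) + 1 = 1 := by omega
          simp [this]
        omega
      set p : Fin (2 ^ (r + 1) - 1) := ⟨((v : ℕ) - 1) / 2, by
        have := v.isLt
        omega⟩ with hp
      have hpv : (p : ℕ) = ((v : ℕ) - 1) / 2 := rfl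
      have hadj : (perfectBinaryTree r).Adj p v := by
        rw [perfectBinaryTree, SimpleGraph.fromRel_adj]
        constructor
        · intro hc
          have : (p : ℕ) = (v : ℕ) := by rw [hc]
          omega
        · left
          omega
      have hlog : Nat.log 2 ((p : ℕ) + 1) ≤ d := by
        have h1 : (p : ℕ) + 1 = ((v : ℕ) + 1) / 2 := by omega
        have h2 : Nat.log 2 (((v : ℕ) + 1) / 2) = Nat.log 2 ((v : ℕ) + 1) - 1 :=
          Nat.log_div_base 2 ((v : ℕ) + 1)
        rw [h1, h2]
        omega
      exact adj_mem (ih p hlog) hadj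

lemma upper (r : ℕ) : IsBurningSeq (perfectBinaryTree r) (seq r) := by
  have h2r1 : 2 ≤ 2 ^ (r + 1) := by
    have : (2:ℕ) ^ 1 ≤ 2 ^ (r + 1) := Nat.pow_le_pow_right (by norm_num) (by omega)
    simpa using this
  have h0 : ((seq r ⟨0, by omega⟩ : ℕ)) = 0 := by simp [seq]
  constructor
  · intro i hi
    obtain ⟨j, hj1, hj2⟩ := coverage _ _ hi
    rw [seq_coe, seq_coe] at hj2
    have : td (2 ^ (j : ℕ)) (2 ^ (i : ℕ)) = (i : ℕ) - (j : ℕ) := td_pow (by omega)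
    omega
  · ext v
    simp only [Set.mem_univ, iff_true]
    have hlog : Nat.log 2 ((v : ℕ) + 1) ≤ r := by
      have hv := v.isLt
      have := Nat.log_lt_of_lt_pow (y := (v : ℕ) + 1) (b := 2) (x := r + 1) (by omega) (by omega)
      omega
    exact depth_burn (by omega) h0 r v hlog

end PBTaux

/-- The burning number of the perfect binary tree of radius `r ≥ 1` is `r + 1`. -/
theorem burningNumber_perfectBinaryTree (r : ℕ) (hr : 1 ≤ r) :
    burningNumber (perfectBinaryTree r) = r + 1 := by
  have hmem : r + 1 ∈ {k | ∃ x : Fin k → Fin (2 ^ (r + 1) - 1),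
      IsBurningSeq (perfectBinaryTree r) x} := ⟨PBTaux.seq r, PBTaux.upper r⟩
  refine le_antisymm (Nat.sInf_le hmem) ?_
  refine le_csInf ⟨r + 1, hmem⟩ ?_
  intro k hk
  obtain ⟨x, hx⟩ := hk
  by_contra hc
  exact PBTaux.lower (by omega) x hx
end

section
/- Let T be a tree containing pairwise disjoint terminal paths Q_1, ..., Q_t (t ≥ 3) forming a decomposed spider with non-terminal endpoints v_1, ..., v_t. If d(v_i, v_j) ≥ 2k for all distinct i, j, and t ≥ k, then b(T) ≥ k + 1. -/
/-! ### Auxiliary material -/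

open Classical in
/-- Pick a vertex outside `S` if possible. -/
noncomputable def pickOut {V : Type*} [Nonempty V] (S : Set V) : V :=
  if h : Sᶜ.Nonempty then h.choose else Classical.arbitrary V

lemma pickOut_notMem {V : Type*} [Nonempty V] {S : Set V} (h : S ≠ Set.univ) :
    pickOut S ∉ S := by
  have h' : Sᶜ.Nonempty := by rwa [Set.nonempty_compl]
  unfold pickOut
  split
  · next hh => exact hh.choose_spec
  · next hh => exact absurd h' hh

/-- Greedy burning process: state is (burned set, next source). -/
noncomputable def greedyBurn {V : Type*} [Nonempty V] (G : SimpleGraph V) :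
    ℕ → Set V × V
  | 0 => (∅, pickOut (∅ : Set V))
  | t + 1 =>
      let st := greedyBurn G t
      let B := st.1 ∪ {v | ∃ u ∈ st.1, G.Adj u v} ∪ {st.2}
      (B, pickOut B)

lemma greedyBurn_subset {V : Type*} [Nonempty V] (G : SimpleGraph V) (t : ℕ) :
    (greedyBurn G t).1 ⊆ (greedyBurn G (t + 1)).1 := by
  intro a ha
  exact Or.inl (Or.inl ha)

lemma greedyBurn_pick_notMem {V : Type*} [Nonempty V] (G : SimpleGraph V) (t : ℕ)
    (h : (greedyBurn G t).1 ≠ Set.univ) : (greedyBurn G t).2 ∉ (greedyBurn G t).1 := by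
  cases t with
  | zero => simp [greedyBurn]
  | succ n => exact pickOut_notMem h

lemma greedyBurn_growth {V : Type*} [Nonempty V] [Fintype V] (G : SimpleGraph V) :
    ∀ t : ℕ, (greedyBurn G t).1 = Set.univ ∨ t ≤ (greedyBurn G t).1.ncard := by
  intro t
  induction t with
  | zero => exact Or.inr (Nat.zero_le _)
  | succ n ih =>
    by_cases hu : (greedyBurn G n).1 = Set.univ
    · left
      apply Set.eq_univ_of_univ_subset
      rw [← hu]
      exact greedyBurn_subset G n
    · rcases ih with h | h
      · exact absurd h hu
      · right
        have hnm := greedyBurn_pick_notMem G n hu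
        have hins : insert (greedyBurn G n).2 (greedyBurn G n).1 ⊆ (greedyBurn G (n + 1)).1 := by
          intro a ha
          rcases ha with rfl | ha
          · exact Or.inr rfl
          · exact Or.inl (Or.inl ha)
        have h1 : (insert (greedyBurn G n).2 (greedyBurn G n).1).ncard
            ≤ (greedyBurn G (n + 1)).1.ncard := Set.ncard_le_ncard hins (Set.toFinite _)
        rw [Set.ncard_insert_of_notMem hnm (Set.toFinite _)] at h1
        omega

lemma greedyBurn_eventually_univ {V : Type*} [Nonempty V] [Fintype V] (G : SimpleGraph V) :
    ∃ t : ℕ, (greedyBurn G t).1 = Set.univ := by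
  rcases greedyBurn_growth G (Fintype.card V + 1) with h | h
  · exact ⟨_, h⟩
  · exfalso
    have h2 : ((greedyBurn G (Fintype.card V + 1)).1).ncard ≤ Fintype.card V := by
      have := Set.ncard_le_ncard (Set.subset_univ (greedyBurn G (Fintype.card V + 1)).1)
        (Set.toFinite _)
      rwa [Set.ncard_univ, Nat.card_eq_fintype_card] at this
    omega

/-- The burned set of the greedy sequence agrees with the greedy process. -/
lemma burnedSet_eq_greedy {V : Type*} [Nonempty V] (G : SimpleGraph V) (K : ℕ) :
    ∀ j ≤ K, burnedSet G (fun i : Fin K => (greedyBurn G i.val).2) j = (greedyBurn G j).1 := by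
  intro j
  induction j with
  | zero => intro _; rfl
  | succ n ih =>
    intro hn
    have hn' : n ≤ K := by omega
    have hnK : n < K := by omega
    simp only [burnedSet, greedyBurn]
    rw [ih hn']
    congr 1
    ext a
    simp only [Set.mem_setOf_eq, Set.mem_singleton_iff, exists_prop]
    constructor
    · rintro ⟨_, rfl⟩; rfl
    · intro h; exact ⟨hnK, h⟩

/-- There always exists a burning sequence for a finite graph on a nonempty vertex set. -/
lemma exists_burning_seq {V : Type*} [Nonempty V] [Fintype V] (G : SimpleGraph V) :
    ∃ (K : ℕ) (x : Fin K → V), IsBurningSeq G x := by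
  set K := sInf {j | (greedyBurn G j).1 = Set.univ} with hKdef
  have hK : (greedyBurn G K).1 = Set.univ :=
    Nat.sInf_mem (greedyBurn_eventually_univ G)
  have hKmin : ∀ j < K, (greedyBurn G j).1 ≠ Set.univ := fun j hj =>
    Nat.notMem_of_lt_sInf hj
  refine ⟨K, fun i => (greedyBurn G i.val).2, ?_, ?_⟩
  · intro i
    rw [burnedSet_eq_greedy G K i.val (le_of_lt i.isLt)]
    exact greedyBurn_pick_notMem G i.val (hKmin i.val i.isLt)
  · rw [burnedSet_eq_greedy G K K le_rfl]
    exact hK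

lemma exists_adj_of_ne {V : Type*} {G : SimpleGraph V} {a b : V} (h : a ≠ b)
    (r : G.Reachable a b) : ∃ u, G.Adj a u := by
  obtain ⟨W⟩ := r
  cases W with
  | nil => exact absurd rfl h
  | cons hadj q => exact ⟨_, hadj⟩

/-- Every burned vertex at time `j` is within distance `j - 1 - i` of source `i`. -/
lemma burned_bound {V : Type*} (G : SimpleGraph V) (hconn : G.Connected)
    {m : ℕ} (x : Fin m → V) :
    ∀ j, ∀ a ∈ burnedSet G x j, ∃ i : Fin m, G.dist (x i) a + (i : ℕ) + 1 ≤ j := by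
  intro j
  induction j with
  | zero => intro a ha; simp [burnedSet] at ha
  | succ n ih =>
    intro a ha
    rcases ha with (ha | ⟨u, hu, hadj⟩) | ⟨h, rfl⟩
    · obtain ⟨i, hi⟩ := ih a ha
      exact ⟨i, by omega⟩
    · obtain ⟨i, hi⟩ := ih u hu
      refine ⟨i, ?_⟩
      have htri : G.dist (x i) a ≤ G.dist (x i) u + G.dist u a :=
        hconn.dist_triangle
      have h1 : G.dist u a = 1 := SimpleGraph.dist_eq_one_iff_adj.mpr hadj
      omega
    · refine ⟨⟨n, h⟩, ?_⟩
      simp [SimpleGraph.dist_self]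

/-- If a tree `T` contains a decomposed spider consisting of `t ≥ 3` pairwise
disjoint terminal paths `Q_i` (here given as paths `p i` from a leaf `w i` to the
non-terminal endpoint `v i`), the path between any two non-terminal endpoints meets
the corresponding terminal paths only in those endpoints, `d(v_i, v_j) ≥ 2k` for all
`i ≠ j`, and `t ≥ k`, then `b(T) ≥ k + 1`. -/
theorem burningNumber_ge_of_decomposed_spider {V : Type*} [Fintype V]
    (G : SimpleGraph V) (hconn : G.Connected) (hacyclic : G.IsAcyclic)
    (t k : ℕ) (ht : 3 ≤ t) (htk : k ≤ t)
    (w v : Fin t → V) (p : ∀ i : Fin t, G.Walk (w i) (v i))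
    (hpath : ∀ i, (p i).IsPath)
    (hleaf : ∀ i, (G.neighborSet (w i)).ncard = 1)
    (hdisj : ∀ i j, i ≠ j → ∀ x : V, x ∈ (p i).support → x ∈ (p j).support → False)
    (hdecomp : ∀ i j, i ≠ j → ∀ q : G.Walk (v i) (v j), q.IsPath →
      (∀ x ∈ q.support, x ∈ (p i).support → x = v i) ∧
      (∀ x ∈ q.support, x ∈ (p j).support → x = v j))
    (hdist : ∀ i j, i ≠ j → ((2 * k : ℕ) : ℕ∞) ≤ G.edist (v i) (v j)) :
    k + 1 ≤ burningNumber G := by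
  haveI : Nonempty V := ⟨v ⟨0, by omega⟩⟩
  -- distances in ℕ
  have hdist' : ∀ i j, i ≠ j → 2 * k ≤ G.dist (v i) (v j) := by
    intro i j hij
    obtain ⟨pw, hp⟩ := (hconn (v i) (v j)).exists_walk_length_eq_edist
    have h1 := hdist i j hij
    rw [← hp] at h1
    have h2 : 2 * k ≤ pw.length := by exact_mod_cast h1
    have h3 : G.dist (v i) (v j) = pw.length := by
      rw [SimpleGraph.dist, ← hp, ENat.toNat_coe]
    omega
  apply le_csInf
  · obtain ⟨K, x, hx⟩ := exists_burning_seq G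
    exact ⟨K, x, hx⟩
  intro m hm
  obtain ⟨x, hx0, hxuniv⟩ := hm
  by_contra hlt
  push_neg at hlt
  have hmk : m ≤ k := by omega
  -- m > 0
  have hm0 : 0 < m := by
    rcases Nat.eq_zero_or_pos m with rfl | h
    · have : (v ⟨0, by omega⟩ : V) ∈ burnedSet G x 0 := by
        rw [hxuniv]; trivial
      simp [burnedSet] at this
    · exact h
  have hk0 : 0 < k := lt_of_lt_of_le hm0 hmk
  -- each vᵢ is covered by some source
  have hcov : ∀ i : Fin t, ∃ s : Fin m, G.dist (x s) (v i) + (s : ℕ) + 1 ≤ m := by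
    intro i
    have : v i ∈ burnedSet G x m := by rw [hxuniv]; trivial
    exact burned_bound G hconn x m (v i) this
  choose σ hσ using hcov
  -- σ is injective
  have hinj : Function.Injective σ := by
    intro i j hij
    by_contra hne
    have h2k := hdist' i j hne
    have htri : G.dist (v i) (v j) ≤ G.dist (v i) (x (σ i)) + G.dist (x (σ i)) (v j) :=
      hconn.dist_triangle
    have hci : G.dist (v i) (x (σ i)) = G.dist (x (σ i)) (v i) := SimpleGraph.dist_comm
    have h1 := hσ i
    have h2 := hσ j
    rw [← hij] at h2
    omega
  have htm : t ≤ m := by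
    have := Fintype.card_le_of_injective σ hinj
    simpa using this
  have htmk : t = m ∧ m = k := by omega
  obtain ⟨rfl, rfl⟩ : t = m ∧ m = k := htmk
  -- σ is surjective
  have hsurj : Function.Surjective σ := by
    have : Function.Bijective σ :=
      (Fintype.bijective_iff_injective_and_card σ).mpr ⟨hinj, by simp⟩
    exact this.surjective
  -- the radius-0 source is some v i₀
  have htpos : t - 1 < t := by omega
  set lst : Fin t := ⟨t - 1, htpos⟩ with hlstdef
  have hlstval : (lst : ℕ) = t - 1 := rfl
  obtain ⟨i₀, hi₀⟩ := hsurj lst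
  have hlast : x lst = v i₀ := by
    have h1 := hσ i₀
    rw [hi₀] at h1
    rw [hlstval] at h1
    have h2 : G.dist (x lst) (v i₀) = 0 := by omega
    exact (hconn.dist_eq_zero_iff).mp h2
  -- pick j₀ ≠ i₀
  haveI : Nontrivial (Fin t) := Fin.nontrivial_iff_two_le.mpr (by omega)
  obtain ⟨j₀, hj₀⟩ := exists_ne i₀
  -- v i₀ has a neighbor u
  have hvne : v i₀ ≠ v j₀ := by
    intro he
    have := hdist' i₀ j₀ (fun hc => hj₀ hc.symm)
    rw [he, SimpleGraph.dist_self] at this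
    omega
  obtain ⟨u, hadj⟩ := exists_adj_of_ne hvne (hconn (v i₀) (v j₀))
  -- u is covered by some source
  have hu : u ∈ burnedSet G x t := by rw [hxuniv]; trivial
  obtain ⟨s', hs'⟩ := burned_bound G hconn x t u hu
  obtain ⟨l, hl⟩ := hsurj s'
  by_cases hli : l = i₀
  · -- then s' is the radius-0 source, u = v i₀, contradicting adjacency
    have hseq : s' = lst := by rw [← hl, hli, hi₀]
    rw [hseq, hlstval] at hs'
    have hd0 : G.dist (x lst) u = 0 := by omega
    have : u = v i₀ := by
      rw [← hlast]
      exact ((hconn.dist_eq_zero_iff).mp hd0).symm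
    rw [this] at hadj
    exact G.irrefl hadj
  · -- else 2k ≤ d(v i₀, v l) ≤ 1 + d(u, x s') + d(x s', v l) ≤ 2k - 1
    have h2k := hdist' i₀ l (fun hc => hli hc.symm)
    have hσl := hσ l
    rw [hl] at hσl
    have htri1 : G.dist (v i₀) (v l) ≤ G.dist (v i₀) u + G.dist u (v l) :=
      hconn.dist_triangle
    have htri2 : G.dist u (v l) ≤ G.dist u (x s') + G.dist (x s') (v l) :=
      hconn.dist_triangle
    have hone : G.dist (v i₀) u = 1 := SimpleGraph.dist_eq_one_iff_adj.mpr hadj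
    have hcomm : G.dist u (x s') = G.dist (x s') u := SimpleGraph.dist_comm
    omega
end

section
/- For the spider graph SP(s, r) with s ≥ r arms, each of length r, the burning number equals r + 1. Moreover, if s ≥ r + 2, then every optimal burning sequence of SP(s, r) must burn the central vertex first. -/
/-- The spider graph `SP(s, r)`: a centre `none` together with `s` arms, each a
path of length `r`; vertex `some (a, p)` is the vertex of arm `a` at distance
`p + 1` from the centre. -/
def spiderSP (s r : ℕ) : SimpleGraph (Option (Fin s × Fin r)) :=
  SimpleGraph.fromRel fun x y =>
    (x = none ∧ ∃ (a : Fin s) (h : 0 < r), y = some (a, ⟨0, h⟩)) ∨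
    (∃ (a : Fin s) (p q : Fin r), x = some (a, p) ∧ y = some (a, q) ∧ (q : ℕ) = (p : ℕ) + 1)

open Function Set

section Burning

variable {V : Type*} (G : SimpleGraph V) {k : ℕ} (x : Fin k → V)

lemma burnedSet_mono : Monotone (burnedSet G x) :=
  monotone_nat_of_le_succ fun _ _ hv => Or.inl (Or.inl hv)

lemma mem_burnedSet_succ_of_adj {t : ℕ} {u v : V} (hu : u ∈ burnedSet G x t) (huv : G.Adj u v) :
    v ∈ burnedSet G x (t + 1) :=
  Or.inl (Or.inr ⟨u, hu, huv⟩)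

lemma exists_source_of_mem_burnedSet (d : V → V → ℕ) (hd_self : ∀ u, d u u = 0)
    (hd_adj : ∀ u v w, G.Adj v w → d u w ≤ d u v + 1) {t : ℕ} {v : V}
    (hv : v ∈ burnedSet G x t) : ∃ j : Fin k, d (x j) v + j + 1 ≤ t := by
  induction t generalizing v with
  | zero => simp [burnedSet] at hv
  | succ t ih =>
    rcases hv with (hv | ⟨u, hu, huv⟩) | ⟨ht, rfl⟩
    · obtain ⟨j, hj⟩ := ih hv
      exact ⟨j, by omega⟩
    · obtain ⟨j, hj⟩ := ih hu
      exact ⟨j, by have := hd_adj (x j) u v huv; omega⟩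
    · exact ⟨⟨t, ht⟩, by simp [hd_self]⟩

end Burning

section Spider

variable {s r : ℕ}

lemma spiderSP_adj_none_some (a : Fin s) (hr : 0 < r) :
    (spiderSP s r).Adj none (some (a, ⟨0, hr⟩)) := by
  rw [spiderSP, SimpleGraph.fromRel_adj]
  exact ⟨by simp, Or.inl (Or.inl ⟨rfl, a, hr, rfl⟩)⟩

lemma spiderSP_adj_some_some (a : Fin s) {p q : Fin r} (h : (q : ℕ) = p + 1) :
    (spiderSP s r).Adj (some (a, p)) (some (a, q)) := by
  rw [spiderSP, SimpleGraph.fromRel_adj]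
  refine ⟨fun heq => ?_, Or.inl (Or.inr ⟨a, p, q, rfl, rfl, h⟩)⟩
  simp only [Option.some.injEq, Prod.mk.injEq, true_and] at heq
  omega

def spiderDist : Option (Fin s × Fin r) → Option (Fin s × Fin r) → ℕ
  | none, none => 0
  | none, some (_, p) | some (_, p), none => (p : ℕ) + 1
  | some (a, p), some (b, q) => if a = b then max (p : ℕ) q - min (p : ℕ) q else p + q + 2

lemma spiderDist_self (u : Option (Fin s × Fin r)) : spiderDist u u = 0 := by
  rcases u with _ | ⟨a, p⟩ <;> simp [spiderDist]

lemma spiderDist_le_of_adj (u v w : Option (Fin s × Fin r)) (h : (spiderSP s r).Adj v w) :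
    spiderDist u w ≤ spiderDist u v + 1 := by
  rw [spiderSP, SimpleGraph.fromRel_adj] at h
  obtain ⟨-, h | h⟩ := h <;>
    rcases h with ⟨rfl, a, h0, rfl⟩ | ⟨a, p, q, rfl, rfl, hpq⟩ <;>
    rcases u with _ | ⟨c, t⟩ <;>
    simp only [spiderDist] <;> (try split_ifs) <;> simp_all <;> omega

lemma exists_source_of_mem_burnedSet_spiderSP {k t : ℕ} {x : Fin k → Option (Fin s × Fin r)}
    {v : Option (Fin s × Fin r)} (hv : v ∈ burnedSet (spiderSP s r) x t) :
    ∃ j : Fin k, spiderDist (x j) v + j + 1 ≤ t :=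
  exists_source_of_mem_burnedSet _ x spiderDist spiderDist_self spiderDist_le_of_adj hv

def spiderLeaf (hr : 0 < r) (a : Fin s) : Option (Fin s × Fin r) :=
  some (a, ⟨r - 1, Nat.sub_lt hr one_pos⟩)

lemma spiderDist_none_spiderLeaf (hr : 0 < r) (a : Fin s) :
    spiderDist none (spiderLeaf hr a) = r := by
  simp only [spiderLeaf, spiderDist]
  omega

lemma eq_none_or_mem_arm_of_spiderDist_spiderLeaf_le (hr : 0 < r) {a : Fin s}
    {v : Option (Fin s × Fin r)} (h : spiderDist v (spiderLeaf hr a) ≤ r) :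
    v = none ∨ ∃ p, v = some (a, p) := by
  rcases v with _ | ⟨b, p⟩
  · exact Or.inl rfl
  · by_cases hba : b = a
    · exact Or.inr ⟨p, by rw [hba]⟩
    · simp only [spiderLeaf, spiderDist, hba, if_false] at h
      omega

/-- `w` is the neighbour of the leaf towards the centre (the centre itself when `r = 1`). -/
lemma exists_near_spiderLeaf_far_from_other_arms (hr : 0 < r) (a : Fin s) :
    ∃ w, spiderDist (spiderLeaf hr a) w = 1 ∧
      ∀ b ≠ a, ∀ q : Fin r, r ≤ spiderDist (some (b, q)) w := by
  by_cases hr1 : r = 1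
  · subst hr1
    exact ⟨none, rfl, fun b _ q => by simp [spiderDist]⟩
  · refine ⟨some (a, ⟨r - 2, by omega⟩), ?_, fun b hb q => ?_⟩
    · simp only [spiderLeaf, spiderDist, if_true]
      omega
    · simp only [spiderDist, hb, if_false]
      omega

lemma injective_of_mem_arm {k : ℕ} {x : Fin k → Option (Fin s × Fin r)} {f : Fin s → Fin k}
    {p : Fin s → Fin r} (hf : ∀ a, x (f a) = some (a, p a)) : Injective f := by
  intro a b hab
  have := (hf a).symm.trans (hab ▸ hf b)
  simp only [Option.some.injEq, Prod.mk.injEq] at this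
  exact this.1

lemma some_mem_burnedSet_of_none_mem {k : ℕ} {x : Fin k → Option (Fin s × Fin r)}
    (h : none ∈ burnedSet (spiderSP s r) x 1) (a : Fin s) (p : Fin r) :
    some (a, p) ∈ burnedSet (spiderSP s r) x (p + 2) := by
  obtain ⟨p, hp⟩ := p
  induction p with
  | zero => exact mem_burnedSet_succ_of_adj _ _ h (spiderSP_adj_none_some a hp)
  | succ p ih =>
    exact mem_burnedSet_succ_of_adj _ _ (ih (by omega)) (spiderSP_adj_some_some a rfl)

def centerFirstSeq (hr : 0 < r) (hsr : r ≤ s) : Fin (r + 1) → Option (Fin s × Fin r) :=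
  Fin.cons none fun i => spiderLeaf hr (Fin.castLE hsr i)

lemma isBurningSeq_centerFirstSeq (hr : 0 < r) (hsr : r ≤ s) :
    IsBurningSeq (spiderSP s r) (centerFirstSeq hr hsr) := by
  refine ⟨fun i => ?_, eq_univ_of_forall ?_⟩
  · -- the centre's fire reaches the leaves in round `r + 1`; distinct leaves are `2r` apart
    refine Fin.cases (by simp [burnedSet]) (fun m hm => ?_) i
    obtain ⟨j, hj⟩ := exists_source_of_mem_burnedSet_spiderSP hm
    have hm_lt : (m : ℕ) < r := m.isLt
    revert hj
    refine Fin.cases ?_ (fun l => ?_) j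
    · simp only [centerFirstSeq, Fin.cons_zero, Fin.cons_succ, spiderDist_none_spiderLeaf,
        Fin.val_zero, Fin.val_succ]
      omega
    · simp only [centerFirstSeq, Fin.cons_succ, Fin.val_succ, spiderLeaf, spiderDist]
      split_ifs with h
      · have := congrArg Fin.val h
        simp only [Fin.val_castLE] at this
        omega
      · omega
  · have hcentre : none ∈ burnedSet (spiderSP s r) (centerFirstSeq hr hsr) 1 :=
      Or.inr ⟨Nat.succ_pos r, rfl⟩
    rintro (_ | ⟨a, p⟩)
    · exact burnedSet_mono _ _ (by omega) hcentre
    · exact burnedSet_mono _ _ (by omega : (p : ℕ) + 2 ≤ r + 1)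
        (some_mem_burnedSet_of_none_mem hcentre a p)

theorem succ_le_of_burnedSet_spiderSP_eq_univ (hr : 0 < r) (hsr : r ≤ s) {k : ℕ}
    {x : Fin k → Option (Fin s × Fin r)} (hx : burnedSet (spiderSP s r) x k = univ) :
    r + 1 ≤ k := by
  by_contra! hk
  have on_arm : ∀ a, ∃ j : Fin k, ∃ p,
      x j = some (a, p) ∧ spiderDist (x j) (spiderLeaf hr a) + j + 1 ≤ k := by
    intro a
    obtain ⟨j, hj⟩ := exists_source_of_mem_burnedSet_spiderSP (hx ▸ mem_univ (spiderLeaf hr a))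
    obtain h₀ | ⟨p, hp⟩ :=
      eq_none_or_mem_arm_of_spiderDist_spiderLeaf_le hr (a := a) (v := x j) (by omega)
    · rw [h₀, spiderDist_none_spiderLeaf] at hj
      omega
    · exact ⟨j, p, hp, hj⟩
  choose f p hf hfd using on_arm
  have hinj := injective_of_mem_arm hf
  have hsk : s ≤ k := by simpa using Fintype.card_le_of_injective f hinj
  have hsurj : Surjective f := ((Fintype.bijective_iff_injective_and_card f).2
    ⟨hinj, by simp only [Fintype.card_fin]; omega⟩).2
  -- the last source has radius 0, so it sits on a leaf
  obtain ⟨a₀, ha₀⟩ := hsurj ⟨k - 1, by omega⟩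
  have hleaf : x (f a₀) = spiderLeaf hr a₀ := by
    have h := hfd a₀
    rw [hf a₀, ha₀] at h
    simp only [spiderLeaf, spiderDist, if_true] at h
    simp only [hf a₀, spiderLeaf, Option.some.injEq, Prod.mk.injEq, true_and, Fin.ext_iff]
    omega
  obtain ⟨w, hw₁, hw⟩ := exists_near_spiderLeaf_far_from_other_arms hr a₀
  obtain ⟨j, hj⟩ := exists_source_of_mem_burnedSet_spiderSP (hx ▸ mem_univ w)
  obtain ⟨a, rfl⟩ := hsurj j
  by_cases ha : a = a₀
  · subst ha
    rw [hleaf, hw₁, ha₀] at hj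
    simp only at hj
    omega
  · have := hw a ha (p a)
    rw [hf a] at hj
    omega

theorem first_source_eq_none_of_burnedSet_spiderSP_eq_univ (hr : 0 < r) (hs : r + 2 ≤ s)
    {x : Fin (r + 1) → Option (Fin s × Fin r)} (hx : burnedSet (spiderSP s r) x (r + 1) = univ) :
    x 0 = none := by
  by_contra h₀
  have on_arm : ∀ a, ∃ j : Fin (r + 1), ∃ p, x j = some (a, p) := by
    intro a
    obtain ⟨j, hj⟩ := exists_source_of_mem_burnedSet_spiderSP (hx ▸ mem_univ (spiderLeaf hr a))
    refine ⟨j, (eq_none_or_mem_arm_of_spiderDist_spiderLeaf_le hr (by omega)).resolve_left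
      fun hj₀ => h₀ ?_⟩
    rw [hj₀, spiderDist_none_spiderLeaf] at hj
    rwa [show j = 0 from Fin.ext (by simp only [Fin.val_zero]; omega)] at hj₀
  choose f p hf using on_arm
  have := Fintype.card_le_of_injective f (injective_of_mem_arm hf)
  simp only [Fintype.card_fin] at this
  omega

end Spider

theorem burningNumber_spiderSP_general (s r : ℕ) (hr : 1 ≤ r) (hsr : r ≤ s) :
    burningNumber (spiderSP s r) = r + 1 ∧
      (r + 2 ≤ s → ∀ x : Fin (r + 1) → Option (Fin s × Fin r),
        IsBurningSeq (spiderSP s r) x → x 0 = none) := by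
  have hmem :
      r + 1 ∈ {k | ∃ x : Fin k → Option (Fin s × Fin r), IsBurningSeq (spiderSP s r) x} :=
    ⟨centerFirstSeq hr hsr, isBurningSeq_centerFirstSeq hr hsr⟩
  refine ⟨le_antisymm (Nat.sInf_le hmem) (le_csInf ⟨r + 1, hmem⟩ ?_), ?_⟩
  · rintro k ⟨x, hx⟩
    exact succ_le_of_burnedSet_spiderSP_eq_univ hr hsr hx.2
  · intro hs x hx
    exact first_source_eq_none_of_burnedSet_spiderSP_eq_univ hr hs hx.2

/-- For `s ≥ r` the spider `SP(s,r)` has burning number `r + 1`; moreover if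
`s ≥ r + 2` then every optimal burning sequence starts at the centre. -/
theorem burningNumber_spiderSP (s r : ℕ) (hr : 1 ≤ r) (hs : 3 ≤ s) (hsr : r ≤ s) :
    burningNumber (spiderSP s r) = r + 1 ∧
      (r + 2 ≤ s → ∀ x : Fin (r + 1) → Option (Fin s × Fin r),
        IsBurningSeq (spiderSP s r) x → x 0 = none) :=
  burningNumber_spiderSP_general s r hr hsr
end

section
/- A path-forest G with components of orders l_1 ≥ l_2 ≥ ... ≥ l_s has burning number at most k if and only if there is a collection of pairwise disjoint subsets A_1, ..., A_s of {1, 3, 5, ..., 2k−1} such that the sum of the elements of A_j is at least l_j for each j (equivalently, each component P_{l_j} can be covered by closed intervals of radii taken from distinct values in {0, 1, ..., k−1}). -/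
/-- The path-forest with component orders `l 0, …, l (s-1)`: component `j` is a
path on `l j` vertices. -/
def pathForest {s : ℕ} (l : Fin s → ℕ) : SimpleGraph (Σ j : Fin s, Fin (l j)) :=
  SimpleGraph.fromRel fun x y => x.1 = y.1 ∧ (x.2 : ℕ) + 1 = (y.2 : ℕ)

/-!
Within `k` rounds the source `x_i` burns the ball of radius `k - 1 - i` around it, so a graph
burns within `k` rounds exactly when these balls cover it; whether each source is still unburned
when it is lit does not matter, since a source that is already burning can be moved to an unburned
vertex, or the sequence cut short if there is none. In a path a ball of radius `r` is an interval
of at most `2r + 1` vertices. Hence the orders `2(k - 1 - i) + 1` of the sources lying in `P_{l_j}`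
form sets `A_j`, disjoint because the sources have distinct indices, with sum at least `l_j`;
conversely, balls with the orders in `A_j` laid end to end cover `P_{l_j}`.
-/

section Burning
variable {V : Type*} (G : SimpleGraph V)

lemma burnedSet_subset_succ {k : ℕ} (x : Fin k → V) (t : ℕ) :
    burnedSet G x t ⊆ burnedSet G x (t + 1) :=
  fun _ hv => Or.inl (Or.inl hv)

lemma apply_mem_burnedSet_succ {k : ℕ} (x : Fin k → V) (i : Fin k) :
    x i ∈ burnedSet G x (i + 1) :=
  Or.inr ⟨i.2, rfl⟩

lemma burnedSet_subset_burnedSet {k k' : ℕ} {x : Fin k → V} {y : Fin k' → V} {t : ℕ}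
    (h : ∀ i : Fin k, (i : ℕ) < t → x i ∈ burnedSet G y (i + 1)) :
    burnedSet G x t ⊆ burnedSet G y t := by
  induction t with
  | zero => exact subset_rfl
  | succ t ih =>
    have ih := ih fun i hi => h i (by omega)
    rintro v ((hv | ⟨u, hu, huv⟩) | ⟨ht, rfl⟩)
    · exact burnedSet_subset_succ G y t (ih hv)
    · exact Or.inl (Or.inr ⟨u, ih hu, huv⟩)
    · exact h ⟨t, ht⟩ (Nat.lt_succ_self t)

lemma burnedSet_congr {k : ℕ} {x y : Fin k → V} {t : ℕ}
    (h : ∀ i : Fin k, (i : ℕ) < t → x i = y i) : burnedSet G x t = burnedSet G y t :=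
  (burnedSet_subset_burnedSet G fun i hi => h i hi ▸ apply_mem_burnedSet_succ G y i).antisymm
    (burnedSet_subset_burnedSet G fun i hi => h i hi ▸ apply_mem_burnedSet_succ G x i)

lemma burnedSet_castLE {k k' t : ℕ} (hk : k' ≤ k) (ht : t ≤ k') (x : Fin k → V) :
    burnedSet G (x ∘ Fin.castLE hk) t = burnedSet G x t := by
  refine (burnedSet_subset_burnedSet G fun i _ =>
    apply_mem_burnedSet_succ G x (Fin.castLE hk i)).antisymm
    (burnedSet_subset_burnedSet G fun i hi => ?_)
  exact apply_mem_burnedSet_succ G (x ∘ Fin.castLE hk) ⟨i, by omega⟩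

lemma burnedSet_update_of_le {k : ℕ} (x : Fin k → V) (m : Fin k) (v : V) {t : ℕ} (ht : t ≤ m) :
    burnedSet G (Function.update x m v) t = burnedSet G x t :=
  burnedSet_congr G fun i hi => Function.update_of_ne (Fin.ne_of_lt (by omega)) v x

lemma burnedSet_subset_update {k : ℕ} {x : Fin k → V} {m : Fin k}
    (hm : x m ∈ burnedSet G x m) (v : V) (t : ℕ) :
    burnedSet G x t ⊆ burnedSet G (Function.update x m v) t := by
  refine burnedSet_subset_burnedSet G fun i _ => ?_
  rcases eq_or_ne i m with rfl | him
  · rw [← burnedSet_update_of_le G x i v le_rfl] at hm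
    exact burnedSet_subset_succ G _ _ hm
  · simpa [him] using apply_mem_burnedSet_succ G (Function.update x m v) i

lemma exists_cover_unburned_prefix {k : ℕ} {x : Fin k → V} (hx : burnedSet G x k = Set.univ)
    (m : ℕ) : ∃ k' ≤ k, ∃ y : Fin k' → V, burnedSet G y k' = Set.univ ∧
      ∀ i : Fin k', (i : ℕ) < m → y i ∉ burnedSet G y i := by
  induction m with
  | zero => exact ⟨k, le_rfl, x, hx, fun i hi => absurd hi (Nat.not_lt_zero _)⟩
  | succ m ih =>
    obtain ⟨k', hk', y, hy, hprefix⟩ := ih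
    by_cases hm : ∃ hm : m < k', y ⟨m, hm⟩ ∈ burnedSet G y m
    · obtain ⟨hm, hburnt⟩ := hm
      by_cases hfull : burnedSet G y m = Set.univ
      · refine ⟨m, hm.le.trans hk', y ∘ Fin.castLE hm.le, ?_, fun i hi => ?_⟩
        · rwa [burnedSet_castLE G hm.le le_rfl]
        · rw [burnedSet_castLE G hm.le i.2.le]
          exact hprefix (Fin.castLE hm.le i) i.2
      · obtain ⟨v, hv⟩ := (Set.ne_univ_iff_exists_notMem _).1 hfull
        refine ⟨k', hk', Function.update y ⟨m, hm⟩ v, ?_, fun i hi => ?_⟩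
        · exact Set.eq_univ_of_univ_subset (hy ▸ burnedSet_subset_update G hburnt v k')
        · rw [burnedSet_update_of_le G y _ v (Nat.le_of_lt_succ hi)]
          rcases (Nat.lt_succ_iff_lt_or_eq.1 hi) with hi | hi
          · rw [Function.update_of_ne (Fin.ne_of_lt hi)]
            exact hprefix i hi
          · rw [show i = ⟨m, hm⟩ from Fin.ext hi, Function.update_self]
            exact hv
    · refine ⟨k', hk', y, hy, fun i hi => ?_⟩
      rcases (Nat.lt_succ_iff_lt_or_eq.1 hi) with hi | hi
      · exact hprefix i hi
      · exact fun h => hm ⟨hi ▸ i.2, by simpa [← hi] using h⟩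

lemma exists_isBurningSeq_of_burnedSet_eq_univ {k : ℕ} {x : Fin k → V}
    (hx : burnedSet G x k = Set.univ) : ∃ k' ≤ k, ∃ y : Fin k' → V, IsBurningSeq G y := by
  obtain ⟨k', hk', y, hy, hunburnt⟩ := exists_cover_unburned_prefix G hx k
  exact ⟨k', hk', y, fun i => hunburnt i (by omega), hy⟩

lemma mem_burnedSet_iff {k : ℕ} (x : Fin k → V) (t : ℕ) (v : V) :
    v ∈ burnedSet G x t ↔
      ∃ i : Fin k, (i : ℕ) < t ∧ ∃ p : G.Walk (x i) v, p.length ≤ t - 1 - i := by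
  induction t generalizing v with
  | zero => simp [burnedSet]
  | succ t ih =>
    constructor
    · rintro ((hv | ⟨u, hu, huv⟩) | ⟨ht, rfl⟩)
      · obtain ⟨i, hi, p, hp⟩ := (ih v).1 hv
        exact ⟨i, by omega, p, by omega⟩
      · obtain ⟨i, hi, p, hp⟩ := (ih u).1 hu
        exact ⟨i, by omega, p.concat huv, by rw [SimpleGraph.Walk.length_concat]; omega⟩
      · exact ⟨⟨t, ht⟩, Nat.lt_succ_self t, .nil, Nat.zero_le _⟩
    · rintro ⟨i, hi, p, hp⟩
      rcases Nat.lt_succ_iff_lt_or_eq.1 hi with hi | hi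
      · cases hq : p.reverse with
        | nil => exact Or.inl (Or.inl ((ih _).2 ⟨i, hi, .nil, Nat.zero_le _⟩))
        | cons hvw q =>
          refine Or.inl (Or.inr ⟨_, (ih _).2 ⟨i, hi, q.reverse, ?_⟩, hvw.symm⟩)
          have := congrArg SimpleGraph.Walk.length hq
          simp only [SimpleGraph.Walk.length_reverse, SimpleGraph.Walk.length_cons] at this ⊢
          omega
      · have hp0 : p.length = 0 := by omega
        obtain rfl := SimpleGraph.Walk.eq_of_length_eq_zero hp0
        exact Or.inr ⟨hi ▸ i.2, by simp [← hi]⟩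

lemma burningNumber_le_of_isBurningSeq {k : ℕ} {x : Fin k → V} (hx : IsBurningSeq G x) :
    burningNumber G ≤ k :=
  Nat.sInf_le ⟨x, hx⟩

lemma burningNumber_le_iff [Finite V] (k : ℕ) :
    burningNumber G ≤ k ↔ ∃ k' ≤ k, ∃ x : Fin k' → V, burnedSet G x k' = Set.univ := by
  constructor
  · intro hk
    let e := Finite.equivFin V
    have hnonempty : {k | ∃ x : Fin k → V, IsBurningSeq G x}.Nonempty := by
      obtain ⟨k', -, y, hy⟩ := exists_isBurningSeq_of_burnedSet_eq_univ G (x := e.symm) <|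
        Set.eq_univ_of_forall fun v => (mem_burnedSet_iff G _ _ v).2
          ⟨e v, (e v).2, .copy .nil rfl (e.symm_apply_apply v), by simp⟩
      exact ⟨k', y, hy⟩
    obtain ⟨x, hx⟩ := Nat.sInf_mem hnonempty
    exact ⟨burningNumber G, hk, x, hx.2⟩
  · rintro ⟨k', hk', x, hx⟩
    obtain ⟨k'', hk'', y, hy⟩ := exists_isBurningSeq_of_burnedSet_eq_univ G hx
    exact (burningNumber_le_of_isBurningSeq G hy).trans (hk''.trans hk')

end Burning

section IntervalCover
variable {ι : Type*} (I : Finset ι) (ρ : ι → ℕ)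

lemma exists_centers_forall_lt_sum :
    ∃ c : ι → ℕ, ∀ a < ∑ i ∈ I, (2 * ρ i + 1), ∃ i ∈ I, Nat.dist a (c i) ≤ ρ i := by
  classical
  induction I using Finset.induction_on with
  | empty => exact ⟨0, fun a ha => by simp at ha⟩
  | @insert j I hj ih =>
    obtain ⟨c, hc⟩ := ih
    refine ⟨Function.update c j ((∑ i ∈ I, (2 * ρ i + 1)) + ρ j), fun a ha => ?_⟩
    rw [Finset.sum_insert hj] at ha
    by_cases haI : a < ∑ i ∈ I, (2 * ρ i + 1)
    · obtain ⟨i, hi, hai⟩ := hc a haI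
      refine ⟨i, Finset.mem_insert_of_mem hi, ?_⟩
      rwa [Function.update_of_ne (ne_of_mem_of_not_mem hi hj)]
    · refine ⟨j, Finset.mem_insert_self j I, ?_⟩
      rw [Function.update_self, Nat.dist]
      omega

lemma le_sum_of_forall_lt_exists_dist_le {c : ι → ℕ} {m : ℕ}
    (h : ∀ a < m, ∃ i ∈ I, Nat.dist a (c i) ≤ ρ i) : m ≤ ∑ i ∈ I, (2 * ρ i + 1) := by
  have hcover : Finset.range m ⊆ I.biUnion fun i => Finset.Icc (c i - ρ i) (c i + ρ i) := by
    intro a ha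
    obtain ⟨i, hi, hai⟩ := h a (Finset.mem_range.1 ha)
    rw [Nat.dist] at hai
    exact Finset.mem_biUnion.2 ⟨i, hi, Finset.mem_Icc.2 ⟨by omega, by omega⟩⟩
  calc m = (Finset.range m).card := (Finset.card_range m).symm
    _ ≤ ∑ i ∈ I, (Finset.Icc (c i - ρ i) (c i + ρ i)).card :=
      (Finset.card_le_card hcover).trans Finset.card_biUnion_le
    _ ≤ ∑ i ∈ I, (2 * ρ i + 1) := Finset.sum_le_sum fun i _ => by rw [Nat.card_Icc]; omega

end IntervalCover

def ballOrder (k : ℕ) (i : Fin k) : ℕ := 2 * (k - 1 - i) + 1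

lemma ballOrder_injective (k : ℕ) : Function.Injective (ballOrder k) := fun i i' h => by
  have := i.2
  have := i'.2
  simp only [ballOrder] at h
  exact Fin.ext (by omega)

lemma mem_range_ballOrder_iff {k m : ℕ} :
    m ∈ Set.range (ballOrder k) ↔ m ∈ (Finset.range k).image fun r => 2 * r + 1 := by
  simp only [Set.mem_range, Finset.mem_image, Finset.mem_range, ballOrder]
  constructor
  · rintro ⟨i, rfl⟩
    exact ⟨k - 1 - i, by omega, rfl⟩
  · rintro ⟨r, hr, rfl⟩
    exact ⟨⟨k - 1 - r, by omega⟩, by simp only; omega⟩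

section PathForest
variable {s : ℕ} {l : Fin s → ℕ}

lemma pathForest_adj {u v : Σ j : Fin s, Fin (l j)} :
    (pathForest l).Adj u v ↔ u.1 = v.1 ∧ ((u.2 : ℕ) + 1 = v.2 ∨ (v.2 : ℕ) + 1 = u.2) := by
  rw [pathForest, SimpleGraph.fromRel_adj]
  constructor
  · rintro ⟨-, ⟨h1, h2⟩ | ⟨h1, h2⟩⟩
    exacts [⟨h1, .inl h2⟩, ⟨h1.symm, .inr h2⟩]
  · rintro ⟨h1, h2 | h2⟩
    · exact ⟨by rintro rfl; omega, .inl ⟨h1, h2⟩⟩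
    · exact ⟨by rintro rfl; omega, .inr ⟨h1.symm, h2⟩⟩

lemma exists_walk_pathForest_of_val_eq_add (j : Fin s) :
    ∀ n : ℕ, ∀ a b : Fin (l j), (b : ℕ) = a + n →
      ∃ p : (pathForest l).Walk ⟨j, a⟩ ⟨j, b⟩, p.length = n
  | 0, a, b, h => by
    obtain rfl : a = b := Fin.ext (by omega)
    exact ⟨.nil, rfl⟩
  | n + 1, a, b, h => by
    obtain ⟨p, hp⟩ :=
      exists_walk_pathForest_of_val_eq_add j n a ⟨b - 1, by omega⟩ (by dsimp only; omega)
    exact ⟨p.concat (pathForest_adj.2 ⟨rfl, .inl (by dsimp only; omega)⟩), by simp [hp]⟩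

lemma exists_walk_pathForest_length_le_iff (u v : Σ j : Fin s, Fin (l j)) (r : ℕ) :
    (∃ p : (pathForest l).Walk u v, p.length ≤ r) ↔ u.1 = v.1 ∧ Nat.dist u.2 v.2 ≤ r := by
  constructor
  · rintro ⟨p, hp⟩
    induction p generalizing r with
    | nil => simp
    | cons hadj p ih =>
      obtain ⟨h1, h2⟩ := ih (r - 1) (by rw [SimpleGraph.Walk.length_cons] at hp; omega)
      obtain ⟨h1', h2'⟩ := pathForest_adj.1 hadj
      simp only [SimpleGraph.Walk.length_cons, Nat.dist] at hp h2 ⊢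
      exact ⟨h1'.trans h1, by omega⟩
  · obtain ⟨j, a⟩ := u
    obtain ⟨j', b⟩ := v
    rintro ⟨rfl, h⟩
    rcases le_total (a : ℕ) b with hab | hab
    · obtain ⟨p, hp⟩ := exists_walk_pathForest_of_val_eq_add j (b - a) a b (by omega)
      exact ⟨p, by simp only [Nat.dist] at h; omega⟩
    · obtain ⟨p, hp⟩ := exists_walk_pathForest_of_val_eq_add j (a - b) b a (by omega)
      exact ⟨p.reverse, by simp only [SimpleGraph.Walk.length_reverse, Nat.dist] at h ⊢; omega⟩

lemma mem_burnedSet_pathForest_iff {k : ℕ} (x : Fin k → Σ j : Fin s, Fin (l j)) (t : ℕ)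
    (v : Σ j : Fin s, Fin (l j)) :
    v ∈ burnedSet (pathForest l) x t ↔
      ∃ i : Fin k, (i : ℕ) < t ∧ (x i).1 = v.1 ∧ Nat.dist (x i).2 v.2 ≤ t - 1 - i := by
  simp only [mem_burnedSet_iff, exists_walk_pathForest_length_le_iff]

lemma exists_disjoint_odd_of_burnedSet_eq_univ {k' k : ℕ} (hk : k' ≤ k)
    {x : Fin k' → Σ j : Fin s, Fin (l j)} (hx : burnedSet (pathForest l) x k' = Set.univ) :
    ∃ A : Fin s → Finset ℕ,
      (∀ j, A j ⊆ (Finset.range k).image fun i => 2 * i + 1) ∧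
      (∀ i j, i ≠ j → Disjoint (A i) (A j)) ∧
      (∀ j, l j ≤ (A j).sum id) := by
  refine ⟨fun j => (Finset.univ.filter fun i => (x i).1 = j).image (ballOrder k'), ?_, ?_, ?_⟩
  · intro j m hm
    obtain ⟨i, -, rfl⟩ := Finset.mem_image.1 hm
    exact Finset.image_subset_image (Finset.range_subset_range.2 hk)
      (mem_range_ballOrder_iff.1 ⟨i, rfl⟩)
  · intro j j' hne
    rw [Finset.disjoint_image (ballOrder_injective k')]
    exact Finset.disjoint_filter.2 fun i _ h h' => hne (h.symm.trans h')
  · intro j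
    rw [Finset.sum_image (ballOrder_injective k').injOn]
    refine le_sum_of_forall_lt_exists_dist_le _ (fun i : Fin k' => k' - 1 - i)
      (c := fun i => (x i).2)
      fun a ha => ?_
    obtain ⟨i, -, h1, h2⟩ :=
      (mem_burnedSet_pathForest_iff x k' ⟨j, ⟨a, ha⟩⟩).1 (hx ▸ Set.mem_univ _)
    exact ⟨i, Finset.mem_filter.2 ⟨Finset.mem_univ _, h1⟩, by rwa [Nat.dist_comm]⟩

lemma exists_centers_of_le_sum_odd {k L : ℕ} {B : Finset ℕ}
    (hB : B ⊆ (Finset.range k).image fun i => 2 * i + 1) (hL : L ≤ B.sum id) :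
    ∃ c : Fin k → ℕ, ∀ a < L, ∃ i ∈ B.preimage (ballOrder k) (ballOrder_injective k).injOn,
      Nat.dist a (c i) ≤ k - 1 - i := by
  obtain ⟨c, hc⟩ := exists_centers_forall_lt_sum
    (B.preimage (ballOrder k) (ballOrder_injective k).injOn) fun i => k - 1 - i
  refine ⟨c, fun a ha => hc a (ha.trans_le (hL.trans_eq ?_))⟩
  exact (Finset.sum_preimage _ _ _ id fun m hm hm' =>
    (hm' (mem_range_ballOrder_iff.2 (hB hm))).elim).symm

lemma exists_burnedSet_eq_univ_of_disjoint_odd [Nonempty (Σ j : Fin s, Fin (l j))] {k : ℕ}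
    (A : Fin s → Finset ℕ) (hA : ∀ j, A j ⊆ (Finset.range k).image fun i => 2 * i + 1)
    (hdisj : ∀ i j, i ≠ j → Disjoint (A i) (A j)) (hsum : ∀ j, l j ≤ (A j).sum id) :
    ∃ x : Fin k → Σ j : Fin s, Fin (l j), burnedSet (pathForest l) x k = Set.univ := by
  choose c hc using fun j => exists_centers_of_le_sum_odd (hA j) (hsum j)
  have hsource : ∀ i : Fin k, ∃ w : Σ j : Fin s, Fin (l j), ∀ j, ballOrder k i ∈ A j →
      ∀ a : Fin (l j), Nat.dist a (c j i) ≤ k - 1 - i → w.1 = j ∧ Nat.dist w.2 a ≤ k - 1 - i := by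
    intro i
    by_cases h : ∃ j, ballOrder k i ∈ A j ∧ 0 < l j
    · obtain ⟨j, hj, hl⟩ := h
      -- a ball centred beyond the end of the path covers no less of it from the last vertex
      refine ⟨⟨j, ⟨min (c j i) (l j - 1), by omega⟩⟩, fun j' hj' a ha => ?_⟩
      obtain rfl : j = j' := by
        by_contra hne
        exact Finset.disjoint_left.1 (hdisj j j' hne) hj hj'
      refine ⟨rfl, ?_⟩
      have := a.2
      simp only [Nat.dist] at ha ⊢
      omega
    · exact ⟨Classical.arbitrary _, fun j hj a => absurd ⟨j, hj, a.pos⟩ h⟩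
  choose x hx using hsource
  refine ⟨x, Set.eq_univ_of_forall fun ⟨j, a⟩ => (mem_burnedSet_pathForest_iff x k _).2 ?_⟩
  obtain ⟨i, hi, hai⟩ := hc j a a.2
  exact ⟨i, i.2, hx i j (Finset.mem_preimage.1 hi) a hai⟩

end PathForest

theorem burningNumber_pathForest_le_iff_general {s : ℕ} (l : Fin s → ℕ) (k : ℕ) :
    burningNumber (pathForest l) ≤ k ↔
      ∃ A : Fin s → Finset ℕ,
        (∀ j, A j ⊆ (Finset.range k).image fun i => 2 * i + 1) ∧
        (∀ i j, i ≠ j → Disjoint (A i) (A j)) ∧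
        (∀ j, l j ≤ (A j).sum id) := by
  rw [burningNumber_le_iff]
  constructor
  · rintro ⟨k', hk', x, hx⟩
    exact exists_disjoint_odd_of_burnedSet_eq_univ hk' hx
  · rintro ⟨A, hA, hdisj, hsum⟩
    rcases isEmpty_or_nonempty (Σ j : Fin s, Fin (l j)) with hV | hV
    · exact ⟨0, k.zero_le, isEmptyElim, Set.eq_univ_of_forall isEmptyElim⟩
    · exact ⟨k, le_rfl, exists_burnedSet_eq_univ_of_disjoint_odd A hA hdisj hsum⟩

/-- A path-forest with component orders `l 0 ≥ l 1 ≥ … ≥ l (s-1)` has burning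
number at most `k` iff there are pairwise disjoint subsets `A j` of
`{1, 3, …, 2k-1}` with `∑ A j ≥ l j` for each `j`. -/
theorem burningNumber_pathForest_le_iff {s : ℕ} (l : Fin s → ℕ)
    (hmono : ∀ i j : Fin s, i ≤ j → l j ≤ l i) (hpos : ∀ j, 1 ≤ l j) (k : ℕ) :
    burningNumber (pathForest l) ≤ k ↔
      ∃ A : Fin s → Finset ℕ,
        (∀ j, A j ⊆ (Finset.range k).image fun i => 2 * i + 1) ∧
        (∀ i j, i ≠ j → Disjoint (A i) (A j)) ∧
        (∀ j, l j ≤ (A j).sum id) :=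
  burningNumber_pathForest_le_iff_general l k
end
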